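/- arXiv:1505.03100 — 10 statements merged into one kernel-verified Lean document; each statement's English description precedes it below -/
import Mathlib

section
/- A lower-triangular invertible infinite matrix $A$ is a $W$-Riordan array (i.e. $w_k^2 C_k^2 = w_{k-1}C_{k-1} w_{k+1}C_{k+1}$ for all $k\geq 1$) if and only if there exist formal power series $\alpha,\beta \in \mathbb{F}[[y]]$ with $\alpha$ invertible ($v(\alpha)=0$) and $v(\beta)=1$ such that $C_k(y) = \alpha(y)\beta(y)^k/w_k$ for every $k$. -/
open Polynomial

/-- Membership in the group `L` of infinite lower triangular matrices with
nonzero diagonal entries. -/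
def memL {F : Type*} [Field F] (A : ℕ → ℕ → F) : Prop :=
  (∀ n k, n < k → A n k = 0) ∧ (∀ n, A n n ≠ 0)

/-- The `k`-th column generating series `C_k(y) = ∑ₙ a_{n,k} yⁿ / wₙ` of a
matrix `A` with respect to the weights `w`. -/
noncomputable def colSeries {F : Type*} [Field F] (w : ℕ → F) (A : ℕ → ℕ → F)
    (k : ℕ) : PowerSeries F :=
  PowerSeries.mk fun n => A n k / w n

/-!
With `Dₖ = wₖ Cₖ` the Riordan condition says `Dₖ² = Dₖ₋₁ Dₖ₊₁`. Every `Dₖ` is nonzero (its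
`k`-th coefficient is the diagonal entry `a_{k,k}`), so in the domain `F⟦y⟧` this forces `Dₖ` to be
geometric with ratio `β = D₁ / D₀`, which is legitimate since `D₀(0) = a_{0,0} ≠ 0`; then
`Dₖ = D₀ βᵏ`. Lower triangularity gives `D₁(0) = 0`, and comparing coefficients of `y` in
`D₁ = D₀ β` shows that the coefficient of `y` in `β` is `a_{1,1} / a_{0,0} ≠ 0`.
-/

open PowerSeries

theorem eq_mul_pow_of_sq_eq_mul {R : Type*} [CommMonoidWithZero R] [IsLeftCancelMulZero R]
    {D : ℕ → R} (hD : ∀ k, D k ≠ 0) (hsq : ∀ k, D (k + 1) ^ 2 = D k * D (k + 2)) {b : R}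
    (hb : D 1 = D 0 * b) (k : ℕ) : D k = D 0 * b ^ k := by
  have hstep : ∀ k, D (k + 1) = D k * b := by
    intro k
    induction k with
    | zero => exact hb
    | succ k ih =>
      apply mul_left_cancel₀ (hD k)
      calc D k * D (k + 2) = D (k + 1) ^ 2 := (hsq k).symm
        _ = D k * (D (k + 1) * b) := by rw [sq]; nth_rw 1 [ih]; rw [mul_assoc, mul_comm b]
  induction k with
  | zero => simp
  | succ k ih => rw [hstep, ih, pow_succ, mul_assoc]

section WeightedColumns

variable {F : Type*} [Field F] (w : ℕ → F) (A : ℕ → ℕ → F)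

noncomputable def weightedColSeries (k : ℕ) : PowerSeries F :=
  w k • colSeries w A k

variable {w A}

theorem coeff_weightedColSeries_self {k : ℕ} (hw : w k ≠ 0) :
    coeff k (weightedColSeries w A k) = A k k := by
  simp only [weightedColSeries, colSeries, map_smul, coeff_mk, smul_eq_mul]
  field_simp

theorem coeff_weightedColSeries_of_lt (hA : ∀ n k, n < k → A n k = 0) {n k : ℕ} (h : n < k) :
    coeff n (weightedColSeries w A k) = 0 := by
  simp [weightedColSeries, colSeries, hA n k h]

theorem weightedColSeries_ne_zero (hw : ∀ n, w n ≠ 0) (hA : ∀ n, A n n ≠ 0) (k : ℕ) :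
    weightedColSeries w A k ≠ 0 := fun h0 =>
  hA k <| by rw [← coeff_weightedColSeries_self (A := A) (hw k), h0, map_zero]

theorem smul_sq_colSeries_eq_iff (j k l : ℕ) :
    w k ^ 2 • colSeries w A k ^ 2 = (w j * w l) • (colSeries w A j * colSeries w A l) ↔
      weightedColSeries w A k ^ 2 = weightedColSeries w A j * weightedColSeries w A l := by
  simp only [weightedColSeries, _root_.smul_pow, smul_mul_smul_comm]

theorem colSeries_eq_inv_smul_iff {k : ℕ} (hw : w k ≠ 0) (P : PowerSeries F) :
    colSeries w A k = (w k)⁻¹ • P ↔ weightedColSeries w A k = P :=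
  eq_inv_smul_iff₀ hw

end WeightedColumns

theorem stmt2_general {F : Type*} [Field F] (w : ℕ → F)
    (hw : ∀ n, w n ≠ 0) (A : ℕ → ℕ → F) (hA : memL A) :
    (∀ k : ℕ, 1 ≤ k →
        (w k) ^ 2 • (colSeries w A k) ^ 2 =
          (w (k - 1) * w (k + 1)) • (colSeries w A (k - 1) * colSeries w A (k + 1)))
    ↔ ∃ α β : PowerSeries F,
        PowerSeries.constantCoeff α ≠ 0 ∧
        PowerSeries.coeff 0 β = 0 ∧ PowerSeries.coeff 1 β ≠ 0 ∧
        ∀ k, colSeries w A k = (w k)⁻¹ • (α * β ^ k) := by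
  obtain ⟨hupper, hdiag⟩ := hA
  simp only [colSeries_eq_inv_smul_iff (hw _), smul_sq_colSeries_eq_iff]
  set D := weightedColSeries w A with hD_def
  constructor
  · intro hsq
    have hα : constantCoeff (D 0) = A 0 0 := by
      rw [← coeff_zero_eq_constantCoeff_apply, coeff_weightedColSeries_self (A := A) (hw 0)]
    set β := D 1 * (D 0)⁻¹
    have hβ : D 1 = D 0 * β := by
      rw [mul_left_comm, PowerSeries.mul_inv_cancel _ (hα ▸ hdiag 0), mul_one]
    have hβ0 : coeff 0 β = 0 := by
      rw [coeff_zero_eq_constantCoeff_apply, map_mul, ← coeff_zero_eq_constantCoeff_apply,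
        coeff_weightedColSeries_of_lt hupper one_pos, zero_mul]
    have hβ1 : A 1 1 = coeff 1 β * A 0 0 := by
      rw [← coeff_weightedColSeries_self (A := A) (hw 1), ← hD_def, ← hα, hβ, coeff_one_mul,
        ← coeff_zero_eq_constantCoeff_apply β, hβ0, mul_zero, zero_add]
    refine ⟨D 0, β, hα ▸ hdiag 0, hβ0, fun h => hdiag 1 (by rw [hβ1, h, zero_mul]), ?_⟩
    refine eq_mul_pow_of_sq_eq_mul (weightedColSeries_ne_zero hw hdiag) (fun k => ?_) hβ
    simpa using hsq (k + 1) le_add_self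
  · rintro ⟨α, β, -, -, -, hD⟩ k hk
    obtain ⟨m, rfl⟩ := Nat.exists_eq_add_of_le' hk
    simp only [hD, Nat.add_sub_cancel]
    ring

/-- A lower-triangular invertible matrix `A` satisfies the `W`-Riordan
condition `wₖ² Cₖ² = wₖ₋₁ Cₖ₋₁ ⬝ wₖ₊₁ Cₖ₊₁` for all `k ≥ 1` iff there are
power series `α` of valuation `0` and `β` of valuation `1` with
`Cₖ = α βᵏ / wₖ` for all `k`. -/
theorem stmt2 {F : Type*} [Field F] (w : ℕ → F) (hw0 : w 0 = 1)
    (hw : ∀ n, w n ≠ 0) (A : ℕ → ℕ → F) (hA : memL A) :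
    (∀ k : ℕ, 1 ≤ k →
        (w k) ^ 2 • (colSeries w A k) ^ 2 =
          (w (k - 1) * w (k + 1)) • (colSeries w A (k - 1) * colSeries w A (k + 1)))
    ↔ ∃ α β : PowerSeries F,
        PowerSeries.constantCoeff α ≠ 0 ∧
        PowerSeries.coeff 0 β = 0 ∧ PowerSeries.coeff 1 β ≠ 0 ∧
        ∀ k, colSeries w A k = (w k)⁻¹ • (α * β ^ k) :=
  stmt2_general w hw A hA
end

section
/- The set $R_W$ of $W$-Riordan arrays is a subgroup of the group $L$ of invertible lower-triangular infinite matrices, and the map sending a Riordan array to its pair of parameters $(\alpha,\beta)$ is a group isomorphism onto the semidirect product of $y\mathbb{F}[[y]]^\times$ (power series of valuation 1 under opposite composition) acting on $\mathbb{F}[[y]]^\times$ (units under multiplication), with product $(\alpha,\beta)\cdot(\gamma,\delta) = (\alpha\cdot(\gamma\circ\beta), \delta\circ\beta)$. -/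
open Polynomial

def matMul {F : Type*} [Field F] (A B : ℕ → ℕ → F) : ℕ → ℕ → F :=
  fun n l => ∑ k ∈ Finset.range (n + 1), A n k * B k l

def idMat {F : Type*} [Field F] : ℕ → ℕ → F :=
  fun n k => if n = k then 1 else 0

/-- Composition `γ ∘ β` of formal power series (meaningful when `β` has zero
constant term, in which case `coeff n (βᵏ) = 0` for `k > n`). -/
noncomputable def psComp {F : Type*} [Field F] (γ β : PowerSeries F) : PowerSeries F :=
  PowerSeries.mk fun n =>
    ∑ k ∈ Finset.range (n + 1), PowerSeries.coeff k γ * PowerSeries.coeff n (β ^ k)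

/-- `A` is a `W`-Riordan array with parameters `(α, β)`. -/
def RiordanParam {F : Type*} [Field F] (w : ℕ → F) (A : ℕ → ℕ → F)
    (α β : PowerSeries F) : Prop :=
  memL A ∧ PowerSeries.constantCoeff α ≠ 0 ∧
    PowerSeries.coeff 0 β = 0 ∧ PowerSeries.coeff 1 β ≠ 0 ∧
    ∀ k, colSeries w A k = (w k)⁻¹ • (α * β ^ k)

/-!
A `W`-Riordan array is determined by its parameters: its entries are
`a n k = w n / w k * [yⁿ] (α βᵏ)`. Multiplying two such arrays, the weights `w k` cancel and
the sum over `k` becomes `[yⁿ] (α · (γ δˡ) ∘ β)` (the fundamental theorem of Riordan arrays).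
Since `psComp · β` is Mathlib's substitution `PowerSeries.subst β`, a ring homomorphism, this
is the array with parameters `(α · γ ∘ β, δ ∘ β)`. The inverse of the array of `(α, β)` is the
array of `((α ∘ β̄)⁻¹, β̄)`, where `β̄` is the compositional inverse of `β`
(`PowerSeries.substInvOfIsUnit`). Finally the parameters are read off the columns:
column `k` determines `α βᵏ`, and columns `0` and `1` give `α` and then `β`.
-/

namespace PowerSeries

open Finset

section CommRing

variable {R : Type*} [CommRing R] {β : R⟦X⟧}

theorem coeff_mul_pow_of_lt (hβ : constantCoeff β = 0) (α : R⟦X⟧) {n k : ℕ} (h : n < k) :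
    coeff n (α * β ^ k) = 0 :=
  X_pow_dvd_iff.mp ((pow_dvd_pow_of_dvd (X_dvd_iff.mpr hβ) k).mul_left α) n h

theorem coeff_pow_of_lt (hβ : constantCoeff β = 0) {n k : ℕ} (h : n < k) :
    coeff n (β ^ k) = 0 := by
  simpa using coeff_mul_pow_of_lt hβ 1 h

theorem coeff_mul_pow_self (hβ : constantCoeff β = 0) (α : R⟦X⟧) (n : ℕ) :
    coeff n (α * β ^ n) = constantCoeff α * coeff 1 β ^ n := by
  obtain ⟨d, rfl⟩ := X_dvd_iff.mpr hβ
  have hd : coeff 1 (X * d) = constantCoeff d := by simp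
  rw [mul_pow, mul_left_comm, coeff_X_pow_mul', if_pos le_rfl, Nat.sub_self,
    coeff_zero_eq_constantCoeff_apply, map_mul, map_pow, hd]

end CommRing

variable {F : Type*} [Field F]

theorem psComp_eq_subst {β : F⟦X⟧} (hβ : constantCoeff β = 0) (γ : F⟦X⟧) :
    psComp γ β = γ.subst β := by
  ext n
  rw [psComp, coeff_mk, coeff_subst' (HasSubst.of_constantCoeff_zero' hβ),
    finsum_eq_sum_of_support_subset (s := range (n + 1))]
  · simp only [smul_eq_mul]
  · intro k hk
    by_contra hkn
    exact hk (by simp only [coeff_pow_of_lt hβ (by simpa using hkn), smul_zero])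

theorem constantCoeff_psComp (γ β : F⟦X⟧) : constantCoeff (psComp γ β) = constantCoeff γ := by
  rw [← coeff_zero_eq_constantCoeff_apply, ← coeff_zero_eq_constantCoeff_apply]
  simp [psComp]

theorem coeff_one_psComp (γ β : F⟦X⟧) :
    coeff 1 (psComp γ β) = coeff 1 γ * coeff 1 β := by
  simp [psComp, sum_range_succ, coeff_one]

theorem coeff_mul_psComp {β : F⟦X⟧} (hβ : constantCoeff β = 0) (α γ : F⟦X⟧) (n : ℕ) :
    coeff n (α * psComp γ β) = ∑ k ∈ range (n + 1), coeff k γ * coeff n (α * β ^ k) := by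
  have htrunc : ∀ j ≤ n,
      coeff j (psComp γ β) = ∑ k ∈ range (n + 1), coeff k γ * coeff j (β ^ k) := by
    intro j hj
    rw [psComp, coeff_mk]
    refine sum_subset (range_subset_range.2 (by omega)) fun k _ hk => ?_
    rw [coeff_pow_of_lt hβ (by simpa using hk), mul_zero]
  simp_rw [coeff_mul, mul_sum]
  rw [sum_comm]
  refine sum_congr rfl fun p hp => ?_
  rw [htrunc p.2 (HasAntidiagonal.antidiagonal.snd_le hp), mul_sum]
  exact sum_congr rfl fun k _ => mul_left_comm _ _ _

end PowerSeries

section Riordan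

open PowerSeries Finset

variable {F : Type*} [Field F] {w : ℕ → F}

noncomputable def riordanArray (w : ℕ → F) (α β : F⟦X⟧) : ℕ → ℕ → F :=
  fun n k => w n / w k * coeff n (α * β ^ k)

theorem RiordanParam.eq_riordanArray (hw : ∀ n, w n ≠ 0) {A : ℕ → ℕ → F} {α β : F⟦X⟧}
    (h : RiordanParam w A α β) : A = riordanArray w α β := by
  funext n k
  have hcol := congrArg (PowerSeries.coeff n) (h.2.2.2.2 k)
  rw [colSeries, coeff_mk, PowerSeries.coeff_smul, smul_eq_mul, div_eq_iff (hw n)] at hcol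
  rw [riordanArray, hcol]
  ring

theorem riordanParam_riordanArray (hw : ∀ n, w n ≠ 0) {α β : F⟦X⟧}
    (hα : constantCoeff α ≠ 0) (hβ0 : coeff 0 β = 0) (hβ1 : coeff 1 β ≠ 0) :
    RiordanParam w (riordanArray w α β) α β := by
  have hβ : constantCoeff β = 0 := by rwa [← coeff_zero_eq_constantCoeff_apply]
  refine ⟨⟨fun n k h => ?_, fun n => ?_⟩, hα, hβ0, hβ1, fun k => ?_⟩
  · rw [riordanArray, coeff_mul_pow_of_lt hβ α h, mul_zero]
  · rw [riordanArray, coeff_mul_pow_self hβ, div_self (hw n), one_mul]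
    exact mul_ne_zero hα (pow_ne_zero _ hβ1)
  · ext n
    rw [colSeries, coeff_mk, PowerSeries.coeff_smul, smul_eq_mul, riordanArray]
    field_simp [hw n, hw k]

theorem riordanArray_one_X (hw : ∀ n, w n ≠ 0) : riordanArray w 1 X = idMat := by
  funext n k
  rw [riordanArray, one_mul, PowerSeries.coeff_X_pow, idMat]
  split_ifs with h
  · rw [h, div_self (hw k), mul_one]
  · rw [mul_zero]

theorem matMul_riordanArray (hw : ∀ n, w n ≠ 0) (α : F⟦X⟧) {β : F⟦X⟧}
    (hβ : constantCoeff β = 0) (γ δ : F⟦X⟧) :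
    matMul (riordanArray w α β) (riordanArray w γ δ) =
      riordanArray w (α * psComp γ β) (psComp δ β) := by
  funext n l
  have hcol : α * psComp γ β * psComp δ β ^ l = α * psComp (γ * δ ^ l) β := by
    have hβs := HasSubst.of_constantCoeff_zero' hβ
    simp only [psComp_eq_subst hβ, subst_mul hβs, subst_pow hβs, mul_assoc]
  rw [matMul, riordanArray, hcol, coeff_mul_psComp hβ, mul_sum]
  refine sum_congr rfl fun k _ => ?_
  simp only [riordanArray]
  field_simp [hw k]

theorem RiordanParam.matMul (hw : ∀ n, w n ≠ 0) {A B : ℕ → ℕ → F} {α β γ δ : F⟦X⟧}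
    (hA : RiordanParam w A α β) (hB : RiordanParam w B γ δ) :
    RiordanParam w (_root_.matMul A B) (α * psComp γ β) (psComp δ β) := by
  obtain ⟨-, hα, hβ0, hβ1, -⟩ := id hA
  obtain ⟨-, hγ, hδ0, hδ1, -⟩ := id hB
  have hβ : constantCoeff β = 0 := by rwa [← coeff_zero_eq_constantCoeff_apply]
  rw [hA.eq_riordanArray hw, hB.eq_riordanArray hw, matMul_riordanArray hw α hβ]
  refine riordanParam_riordanArray hw ?_ ?_ ?_
  · rw [map_mul, constantCoeff_psComp]
    exact mul_ne_zero hα hγ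
  · rwa [coeff_zero_eq_constantCoeff_apply, constantCoeff_psComp,
      ← coeff_zero_eq_constantCoeff_apply]
  · rw [coeff_one_psComp]
    exact mul_ne_zero hδ1 hβ1

theorem RiordanParam.exists_inverse (hw : ∀ n, w n ≠ 0) {A : ℕ → ℕ → F} {α β : F⟦X⟧}
    (hA : RiordanParam w A α β) :
    ∃ (B : ℕ → ℕ → F) (γ δ : F⟦X⟧), RiordanParam w B γ δ ∧
      _root_.matMul A B = idMat ∧ _root_.matMul B A = idMat := by
  obtain ⟨-, hα, hβ0, hβ1, -⟩ := id hA
  have hβ : constantCoeff β = 0 := by rwa [← coeff_zero_eq_constantCoeff_apply]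
  have hβs := HasSubst.of_constantCoeff_zero' hβ
  set δ := β.substInvOfIsUnit hβ1.isUnit
  have hδ : constantCoeff δ = 0 := constantCoeff_substInvOfIsUnit β hβ1.isUnit
  have hδs := HasSubst.of_constantCoeff_zero' hδ
  have hδβ : psComp δ β = PowerSeries.X := by
    rw [psComp_eq_subst hβ]
    exact subst_substInvOfIsUnit_left β hβ hβ1.isUnit
  have hβδ : psComp β δ = PowerSeries.X := by
    rw [psComp_eq_subst hδ]
    exact subst_substInvOfIsUnit_right β hβ hβ1.isUnit
  have hαδ : constantCoeff (psComp α δ) ≠ 0 := by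
    rwa [constantCoeff_psComp]
  set γ := (psComp α δ)⁻¹
  have hγα : γ * psComp α δ = 1 := PowerSeries.inv_mul_cancel _ hαδ
  -- `(α ∘ δ) ∘ β = α`, so composing `γ * (α ∘ δ) = 1` with `β` inverts `α`
  have hαγ : α * psComp γ β = 1 := by
    have h := congrArg (substAlgHom hβs) hγα
    rw [map_mul, map_one, coe_substAlgHom hβs, psComp_eq_subst hδ,
      subst_comp_subst_apply hδs hβs, ← psComp_eq_subst hβ δ, hδβ, X_subst] at h
    rw [psComp_eq_subst hβ, mul_comm, h]
  refine ⟨riordanArray w γ δ, γ, δ, riordanParam_riordanArray hw ?_ ?_ ?_, ?_, ?_⟩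
  · rw [constantCoeff_inv]
    exact inv_ne_zero hαδ
  · rw [coeff_zero_eq_constantCoeff_apply, hδ]
  · simpa [δ] using hβ1
  · rw [hA.eq_riordanArray hw, matMul_riordanArray hw α hβ, hαγ, hδβ, riordanArray_one_X hw]
  · rw [hA.eq_riordanArray hw, matMul_riordanArray hw γ hδ, hγα, hβδ, riordanArray_one_X hw]

theorem RiordanParam.mul_pow_eq (hw : ∀ n, w n ≠ 0) {A : ℕ → ℕ → F} {α β α' β' : F⟦X⟧}
    (h : RiordanParam w A α β) (h' : RiordanParam w A α' β') (k : ℕ) :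
    α * β ^ k = α' * β' ^ k :=
  smul_right_injective _ (inv_ne_zero (hw k)) ((h.2.2.2.2 k).symm.trans (h'.2.2.2.2 k))

theorem RiordanParam.params_eq (hw : ∀ n, w n ≠ 0) {A : ℕ → ℕ → F} {α β α' β' : F⟦X⟧}
    (h : RiordanParam w A α β) (h' : RiordanParam w A α' β') : α = α' ∧ β = β' := by
  have hα : α = α' := by simpa using h.mul_pow_eq hw h' 0
  have hα0 : α ≠ 0 := by
    rintro rfl
    exact h.2.1 (map_zero _)
  exact ⟨hα, mul_left_cancel₀ hα0 (by simpa [hα] using h.mul_pow_eq hw h' 1)⟩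

end Riordan

theorem stmt3_general {F : Type*} [Field F] (w : ℕ → F)
    (hw : ∀ n, w n ≠ 0) :
    -- the identity of `L` is Riordan, with parameters `(1, y)`
    RiordanParam w (idMat (F := F)) 1 PowerSeries.X ∧
    -- closure: the product is Riordan, with the semidirect-product parameters
    (∀ A B : ℕ → ℕ → F, ∀ α β γ δ : PowerSeries F,
      RiordanParam w A α β → RiordanParam w B γ δ →
        RiordanParam w (matMul A B) (α * psComp γ β) (psComp δ β)) ∧
    -- inverses exist within the Riordan group
    (∀ (A : ℕ → ℕ → F) (α β : PowerSeries F), RiordanParam w A α β →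
      ∃ (B : ℕ → ℕ → F) (γ δ : PowerSeries F), RiordanParam w B γ δ ∧
        matMul A B = idMat ∧ matMul B A = idMat) ∧
    -- the parametrization is injective in both directions …
    (∀ (A B : ℕ → ℕ → F) (α β : PowerSeries F),
      RiordanParam w A α β → RiordanParam w B α β → A = B) ∧
    (∀ (A : ℕ → ℕ → F) (α β α' β' : PowerSeries F),
      RiordanParam w A α β → RiordanParam w A α' β' → α = α' ∧ β = β') ∧
    -- … and surjective onto all admissible pairs `(α, β)`
    (∀ α β : PowerSeries F, PowerSeries.constantCoeff α ≠ 0 →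
      PowerSeries.coeff 0 β = 0 → PowerSeries.coeff 1 β ≠ 0 →
        ∃ A : ℕ → ℕ → F, RiordanParam w A α β) := by
  refine ⟨?_, fun A B α β γ δ hA hB => hA.matMul hw hB, fun A α β hA => hA.exists_inverse hw,
    fun A B α β hA hB => (hA.eq_riordanArray hw).trans (hB.eq_riordanArray hw).symm,
    fun A α β α' β' hA hA' => hA.params_eq hw hA',
    fun α β hα hβ0 hβ1 => ⟨_, riordanParam_riordanArray hw hα hβ0 hβ1⟩⟩
  rw [← riordanArray_one_X hw]
  exact riordanParam_riordanArray hw (by simp) (by simp) (by simp)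

/-- The `W`-Riordan arrays form a subgroup of `L`, and `A ↦ (α, β)` is a group
isomorphism onto the semidirect product of `y𝔽[[y]]ˣ` (opposite composition)
acting on `𝔽[[y]]ˣ` (multiplication), with product
`(α, β)·(γ, δ) = (α·(γ∘β), δ∘β)`. -/
theorem stmt3 {F : Type*} [Field F] (w : ℕ → F) (hw0 : w 0 = 1)
    (hw : ∀ n, w n ≠ 0) :
    -- the identity of `L` is Riordan, with parameters `(1, y)`
    RiordanParam w (idMat (F := F)) 1 PowerSeries.X ∧
    -- closure: the product is Riordan, with the semidirect-product parameters
    (∀ A B : ℕ → ℕ → F, ∀ α β γ δ : PowerSeries F,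
      RiordanParam w A α β → RiordanParam w B γ δ →
        RiordanParam w (matMul A B) (α * psComp γ β) (psComp δ β)) ∧
    -- inverses exist within the Riordan group
    (∀ (A : ℕ → ℕ → F) (α β : PowerSeries F), RiordanParam w A α β →
      ∃ (B : ℕ → ℕ → F) (γ δ : PowerSeries F), RiordanParam w B γ δ ∧
        matMul A B = idMat ∧ matMul B A = idMat) ∧
    -- the parametrization is injective in both directions …
    (∀ (A B : ℕ → ℕ → F) (α β : PowerSeries F),
      RiordanParam w A α β → RiordanParam w B α β → A = B) ∧
    (∀ (A : ℕ → ℕ → F) (α β α' β' : PowerSeries F),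
      RiordanParam w A α β → RiordanParam w A α' β' → α = α' ∧ β = β') ∧
    -- … and surjective onto all admissible pairs `(α, β)`
    (∀ α β : PowerSeries F, PowerSeries.constantCoeff α ≠ 0 →
      PowerSeries.coeff 0 β = 0 → PowerSeries.coeff 1 β ≠ 0 →
        ∃ A : ℕ → ℕ → F, RiordanParam w A α β) :=
  stmt3_general w hw
end

section
/- A matrix $A \in L$ lies in the $W$-Riordan group $R_W$ if and only if the bivariate generating function $\sum_n p_n(x) y^n/w_n \in \mathbb{F}[x][[y]]$ of its associated polynomial sequence equals $\alpha(y) W(x\beta(y))$ for some power series $\alpha, \beta \in \mathbb{F}[[y]]$ with $v(\alpha)=0$ and $v(\beta)=1$. -/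
open Polynomial

/-- The defining quadratic relation of `W`-Riordan arrays:
`wₖ² Cₖ² = wₖ₋₁ Cₖ₋₁ ⬝ wₖ₊₁ Cₖ₊₁` for `k ≥ 1`. -/
def IsRiordan {F : Type*} [Field F] (w : ℕ → F) (A : ℕ → ℕ → F) : Prop :=
  ∀ k : ℕ, 1 ≤ k →
    (w k) ^ 2 • (colSeries w A k) ^ 2 =
      (w (k - 1) * w (k + 1)) • (colSeries w A (k - 1) * colSeries w A (k + 1))

/-- The polynomial sequence associated to a lower triangular matrix `A`:
`pₙ(x) = ∑_{k ≤ n} a_{n,k} xᵏ`. -/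
noncomputable def seqOfMat {F : Type*} [Field F] (A : ℕ → ℕ → F) (n : ℕ) : F[X] :=
  ∑ k ∈ Finset.range (n + 1), A n k • X ^ k

/-!
Write `Dₖ = wₖ Cₖ(y)`. Comparing coefficients of `xᵏ yⁿ`, the generating-function identity says
`Dₖ = α βᵏ` for every `k` (above the diagonal both sides vanish), while the Riordan relation says
`Dₖ₊₁² = Dₖ Dₖ₊₂`. In the integral domain `F⟦y⟧` the latter makes `(Dₖ)` geometric: take `α = D₀`,
a unit because `a₀₀ ≠ 0`, and `β = D₀⁻¹ D₁`, and cancel the nonzero factor `α βᵏ` inductively.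
The valuation of `β` is `1` because `a₀₁ = 0` and `a₁₁ ≠ 0`.
-/

theorem eq_mul_pow_of_sq_eq_mul_s4 {M : Type*} [CommMonoidWithZero M] [IsCancelMulZero M]
    {d : ℕ → M} {a b : M} (ha : a ≠ 0) (hb : b ≠ 0) (h0 : d 0 = a) (h1 : d 1 = a * b)
    (hd : ∀ k, d (k + 1) ^ 2 = d k * d (k + 2)) (k : ℕ) : d k = a * b ^ k := by
  suffices ∀ k, d k = a * b ^ k ∧ d (k + 1) = a * b ^ (k + 1) from (this k).1
  intro j
  induction j with
  | zero => simp [h0, h1]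
  | succ j ih =>
    refine ⟨ih.2, mul_left_cancel₀ (mul_ne_zero ha (pow_ne_zero j hb)) ?_⟩
    rw [← ih.1, ← hd, ih.2, ih.1]
    simp only [sq, pow_add, pow_one]
    ac_rfl

theorem Polynomial.coeff_sum_range_smul_X_pow {R : Type*} [Semiring R] (c : ℕ → R)
    (n j : ℕ) :
    (∑ k ∈ Finset.range (n + 1), c k • (X : R[X]) ^ k).coeff j =
      if j ≤ n then c j else 0 := by
  simp [finsetSum_coeff, coeff_X_pow]

theorem PowerSeries.coeff_mul_pow_of_lt_s4 {R : Type*} [CommSemiring R] (α β : PowerSeries R)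
    (hβ : coeff 0 β = 0) {n k : ℕ} (h : n < k) : coeff n (α * β ^ k) = 0 :=
  coeff_mul_of_lt_order <| (Nat.cast_lt.2 h).trans_le <|
    le_order_pow_of_constantCoeff_eq_zero k (by rwa [← coeff_zero_eq_constantCoeff_apply])

theorem PowerSeries.coeff_one_mul_of_coeff_zero_eq_zero {R : Type*} [CommSemiring R]
    (α β : PowerSeries R) (hβ : coeff 0 β = 0) :
    coeff 1 (α * β) = constantCoeff α * coeff 1 β := by
  simp [coeff_mul, Finset.Nat.antidiagonal_succ, hβ]

section ScaledColumns

variable {F : Type*} [Field F] {w : ℕ → F} {A : ℕ → ℕ → F}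

noncomputable def scaledColSeries (w : ℕ → F) (A : ℕ → ℕ → F) (k : ℕ) : PowerSeries F :=
  w k • colSeries w A k

theorem coeff_scaledColSeries (n k : ℕ) :
    PowerSeries.coeff n (scaledColSeries w A k) = w k * (A n k / w n) := by
  simp [scaledColSeries, colSeries]

theorem coeff_scaledColSeries_self (hw : ∀ n, w n ≠ 0) (n : ℕ) :
    PowerSeries.coeff n (scaledColSeries w A n) = A n n := by
  rw [coeff_scaledColSeries, mul_div_cancel₀ _ (hw n)]

theorem coeff_scaledColSeries_of_lt (hA : ∀ n k, n < k → A n k = 0) {n k : ℕ} (h : n < k) :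
    PowerSeries.coeff n (scaledColSeries w A k) = 0 := by
  rw [coeff_scaledColSeries, hA n k h, zero_div, mul_zero]

theorem isRiordan_iff_sq_eq_mul :
    IsRiordan w A ↔ ∀ k, scaledColSeries w A (k + 1) ^ 2 =
      scaledColSeries w A k * scaledColSeries w A (k + 2) := by
  simp only [IsRiordan, scaledColSeries, _root_.smul_pow, smul_mul_smul_comm]
  refine ⟨fun h k => h (k + 1) k.succ_pos, fun h k hk => ?_⟩
  obtain ⟨j, rfl⟩ := Nat.exists_eq_add_of_le' hk
  exact h j

theorem smul_seqOfMat_eq_iff_scaledColSeries_eq (hw : ∀ n, w n ≠ 0)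
    (hA : ∀ n k, n < k → A n k = 0) (α β : PowerSeries F) (hβ : PowerSeries.coeff 0 β = 0) :
    (∀ n, (w n)⁻¹ • seqOfMat A n =
        ∑ k ∈ Finset.range (n + 1),
          (PowerSeries.coeff n (α * β ^ k) / w k) • (X : F[X]) ^ k) ↔
      ∀ k, scaledColSeries w A k = α * β ^ k := by
  have hentry : ∀ n k, (w n)⁻¹ * A n k = PowerSeries.coeff n (α * β ^ k) / w k ↔
      w k * (A n k / w n) = PowerSeries.coeff n (α * β ^ k) := by
    intro n k
    rw [eq_div_iff (hw k), ← div_eq_inv_mul, mul_comm]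
  have hseq : ∀ n, (w n)⁻¹ • seqOfMat A n =
      ∑ k ∈ Finset.range (n + 1), ((w n)⁻¹ * A n k) • (X : F[X]) ^ k := by
    simp [seqOfMat, Finset.smul_sum, smul_smul]
  simp only [hseq, Polynomial.ext_iff, coeff_sum_range_smul_X_pow, PowerSeries.ext_iff]
  constructor
  · intro h k n
    rcases lt_or_ge n k with hnk | hkn
    · rw [coeff_scaledColSeries_of_lt hA hnk, PowerSeries.coeff_mul_pow_of_lt_s4 α β hβ hnk]
    · simpa [hkn, coeff_scaledColSeries, hentry] using h n k
  · intro h n k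
    split_ifs with hkn
    · rw [hentry, ← coeff_scaledColSeries, h]
    · rfl

end ScaledColumns

theorem stmt4_general {F : Type*} [Field F] (w : ℕ → F)
    (hw : ∀ n, w n ≠ 0) (A : ℕ → ℕ → F) (hA : memL A) :
    IsRiordan w A ↔
      ∃ α β : PowerSeries F,
        PowerSeries.constantCoeff α ≠ 0 ∧
        PowerSeries.coeff 0 β = 0 ∧ PowerSeries.coeff 1 β ≠ 0 ∧
        ∀ n, (w n)⁻¹ • seqOfMat A n =
          ∑ k ∈ Finset.range (n + 1),
            (PowerSeries.coeff n (α * β ^ k) / w k) • (X : F[X]) ^ k := by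
  rw [isRiordan_iff_sq_eq_mul]
  constructor
  · intro hR
    set α := scaledColSeries w A 0
    have hα : PowerSeries.constantCoeff α ≠ 0 := by
      rw [← PowerSeries.coeff_zero_eq_constantCoeff_apply, coeff_scaledColSeries_self hw]
      exact hA.2 0
    set β := α⁻¹ * scaledColSeries w A 1
    have hαβ : α * β = scaledColSeries w A 1 := by
      rw [← mul_assoc, PowerSeries.mul_inv_cancel _ hα, one_mul]
    have hβ0 : PowerSeries.coeff 0 β = 0 := by
      have := congrArg (PowerSeries.coeff 0) hαβ
      rw [coeff_scaledColSeries_of_lt hA.1 one_pos, PowerSeries.coeff_zero_eq_constantCoeff_apply,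
        map_mul, ← PowerSeries.coeff_zero_eq_constantCoeff_apply β] at this
      exact (mul_eq_zero.1 this).resolve_left hα
    have hβ1 : PowerSeries.coeff 1 β ≠ 0 := by
      have := PowerSeries.coeff_one_mul_of_coeff_zero_eq_zero α β hβ0
      rw [hαβ, coeff_scaledColSeries_self hw] at this
      exact right_ne_zero_of_mul (this ▸ hA.2 1)
    refine ⟨α, β, hα, hβ0, hβ1, (smul_seqOfMat_eq_iff_scaledColSeries_eq hw hA.1 α β hβ0).2 ?_⟩
    exact eq_mul_pow_of_sq_eq_mul_s4 (fun h => hα (by simp [h])) (fun h => hβ1 (by simp [h]))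
      rfl hαβ.symm hR
  · rintro ⟨α, β, -, hβ0, -, h⟩ k
    simp only [(smul_seqOfMat_eq_iff_scaledColSeries_eq hw hA.1 α β hβ0).1 h]
    ring

/-- `A ∈ L` lies in `R_W` iff the bivariate generating function
`∑ₙ pₙ(x) yⁿ/wₙ` equals `α(y)·W(xβ(y))` for some `α` of valuation `0` and `β`
of valuation `1`; the equality is stated coefficientwise in `y`, the `yⁿ`
coefficient of `α(y)·W(xβ(y))` being `∑ₖ (coeff_n (α βᵏ)/wₖ) xᵏ`. -/
theorem stmt4 {F : Type*} [Field F] (w : ℕ → F) (hw0 : w 0 = 1)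
    (hw : ∀ n, w n ≠ 0) (A : ℕ → ℕ → F) (hA : memL A) :
    IsRiordan w A ↔
      ∃ α β : PowerSeries F,
        PowerSeries.constantCoeff α ≠ 0 ∧
        PowerSeries.coeff 0 β = 0 ∧ PowerSeries.coeff 1 β ≠ 0 ∧
        ∀ n, (w n)⁻¹ • seqOfMat A n =
          ∑ k ∈ Finset.range (n + 1),
            (PowerSeries.coeff n (α * β ^ k) / w k) • (X : F[X]) ^ k :=
  stmt4_general w hw A hA
end

section
/- A graded sequence $\{p_n\}$ is $W$-Sheffer if and only if for every $h \in \mathbb{F}$ the operator $T_{h,W}$ multiplies the formal series $\sum_n p_n(x)y^n/w_n \in \mathbb{F}[x][[y]]$ by a power series in $y$ that is independent of $x$. -/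
/-! With `e n = (w n)⁻¹ • p n`, a basis of `F[X]` since `deg p n = n`, the operator `Q` becomes the
backward shift `e (n + 1) ↦ e n`, `e 0 ↦ 0`. Writing `r n k` for the `k`-th coordinate of `T (e n)`,
commuting with the shift means `r (n + 1) (k + 1) = r n k` and `r 0 (k + 1) = 0`, i.e. the matrix of
`T` is lower-triangular Toeplitz: `r n k = g (n - k)`. That is precisely the statement that `T`
multiplies `∑ e n yⁿ` by `∑ g j yʲ`. -/

open Polynomial

lemma eq_ite_of_apply_succ_succ {R : Type*} [Zero R] {r : ℕ → ℕ → R}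
    (h0 : ∀ k, r 0 (k + 1) = 0) (hs : ∀ n k, r (n + 1) (k + 1) = r n k) (n k : ℕ) :
    r n k = if k ≤ n then r (n - k) 0 else 0 := by
  induction k generalizing n with
  | zero => simp
  | succ k ih =>
    cases n with
    | zero => simp [h0]
    | succ n => simp [hs, ih]

namespace Module.Basis

variable {R V : Type*} [Semiring R] [AddCommMonoid V] [Module R V] (e : Basis ℕ R V)

lemma repr_sum_range_coeff_smul (g : PowerSeries R) (n k : ℕ) :
    e.repr (∑ j ∈ Finset.range (n + 1), PowerSeries.coeff (n - j) g • e j) k =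
      if k ≤ n then PowerSeries.coeff (n - k) g else 0 := by
  simp [Finsupp.single_apply, Finset.sum_ite_eq']

variable {e} {Q : V →ₗ[R] V} (hQ0 : Q (e 0) = 0) (hQ : ∀ n, Q (e (n + 1)) = e n)
include hQ0 hQ

lemma repr_shift_apply (v : V) (k : ℕ) : e.repr (Q v) k = e.repr v (k + 1) := by
  suffices (e.coord k).comp Q = e.coord (k + 1) from LinearMap.congr_fun this v
  refine e.ext fun n => ?_
  cases n <;> simp [hQ0, hQ, Finsupp.single_apply]

theorem comp_eq_comp_iff_exists_powerSeries (T : V →ₗ[R] V) :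
    Q ∘ₗ T = T ∘ₗ Q ↔ ∃ g : PowerSeries R, ∀ n,
      T (e n) = ∑ k ∈ Finset.range (n + 1), PowerSeries.coeff (n - k) g • e k := by
  have hcoord : ∀ g n,
      (T (e n) = ∑ k ∈ Finset.range (n + 1), PowerSeries.coeff (n - k) g • e k) ↔
      ∀ k, e.repr (T (e n)) k = if k ≤ n then PowerSeries.coeff (n - k) g else 0 := by
    intro g n
    simp only [e.ext_elem_iff, e.repr_sum_range_coeff_smul]
  constructor
  · intro hcomm
    have hrepr_succ : ∀ n k, e.repr (T (e n)) (k + 1) = e.repr (T (Q (e n))) k := fun n k => by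
      rw [← repr_shift_apply hQ0 hQ, ← LinearMap.comp_apply, hcomm, LinearMap.comp_apply]
    have hr := eq_ite_of_apply_succ_succ (r := fun n k => e.repr (T (e n)) k)
      (fun k => by simp [hrepr_succ, hQ0]) (fun n k => by simp [hrepr_succ, hQ])
    exact ⟨PowerSeries.mk fun j => e.repr (T (e j)) 0, fun n => (hcoord _ n).2 fun k => by
      simpa using hr n k⟩
  · rintro ⟨g, hg⟩
    refine e.ext fun n => e.ext_elem_iff.2 fun k => ?_
    simp only [LinearMap.comp_apply, repr_shift_apply hQ0 hQ, (hcoord g _).1 (hg _)]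
    cases n with
    | zero => simp [hQ0]
    | succ n => simp [hQ, (hcoord g _).1 (hg _)]

end Module.Basis

theorem stmt6_general {F : Type*} [Field F] (w : ℕ → F)
    (hw : ∀ n, w n ≠ 0)
    (p : ℕ → F[X]) (hp : ∀ n, (p n).degree = n)
    (Q : F[X] →ₗ[F] F[X]) (hQ0 : Q (p 0) = 0)
    (hQ : ∀ n : ℕ, Q (p (n + 1)) = (w (n + 1) / w n) • p n)
    (T : F → F[X] →ₗ[F] F[X]) :
    (∀ h : F, Q ∘ₗ T h = T h ∘ₗ Q) ↔
      (∀ h : F, ∃ g : PowerSeries F, ∀ n : ℕ,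
        (w n)⁻¹ • (T h) (p n) =
          ∑ k ∈ Finset.range (n + 1),
            (PowerSeries.coeff (n - k) g) • ((w k)⁻¹ • p k)) := by
  let S : Sequence F := ⟨p, hp⟩
  let e := (S.basis fun n => (leadingCoeff_ne_zero.2 (S.ne_zero n)).isUnit).isUnitSMul
    fun n => (inv_ne_zero (hw n)).isUnit
  have he : ∀ n, e n = (w n)⁻¹ • p n := fun n => by
    rw [Module.Basis.isUnitSMul_apply, Sequence.basis_eq_self]
  have hQe : ∀ n, Q (e (n + 1)) = e n := fun n => by
    rw [he, he, map_smul, hQ, smul_smul, inv_mul_eq_div, div_div_cancel_left' (hw _)]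
  refine forall_congr' fun h => ?_
  rw [Module.Basis.comp_eq_comp_iff_exists_powerSeries (by simp [he, hQ0]) hQe]
  simp only [he, map_smul]

/-- A graded sequence `{pₙ}` is `W`-Sheffer iff for every `h` the translation
`T_{h,W}`, applied coefficientwise to `∑ₙ pₙ(x) yⁿ/wₙ`, multiplies this series
by a power series `g(y)` independent of `x`: coefficientwise,
`T h (pₙ)/wₙ = ∑_{k ≤ n} (coeff_{n-k} g) · pₖ/wₖ`. -/
theorem stmt6 {F : Type*} [Field F] (w : ℕ → F) (hw0 : w 0 = 1)
    (hw : ∀ n, w n ≠ 0)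
    (p : ℕ → F[X]) (hp : ∀ n, (p n).degree = n)
    (Q : F[X] →ₗ[F] F[X]) (hQ0 : Q (p 0) = 0)
    (hQ : ∀ n : ℕ, Q (p (n + 1)) = (w (n + 1) / w n) • p n)
    (T : F → F[X] →ₗ[F] F[X])
    (hT : ∀ (h : F) (n : ℕ), T h (X ^ n) =
      ∑ k ∈ Finset.range (n + 1),
        (w n * h ^ (n - k) / (w (n - k) * w k)) • (X : F[X]) ^ k) :
    (∀ h : F, Q ∘ₗ T h = T h ∘ₗ Q) ↔
      (∀ h : F, ∃ g : PowerSeries F, ∀ n : ℕ,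
        (w n)⁻¹ • (T h) (p n) =
          ∑ k ∈ Finset.range (n + 1),
            (PowerSeries.coeff (n - k) g) • ((w k)⁻¹ • p k)) :=
  stmt6_general w hw p hp Q hQ0 hQ T
end

section
/- Let $\{p_n\}$ be a $W$-Sheffer sequence with parameters $(\alpha,\beta)$, so $\sum_n p_n(x)y^n/w_n = \alpha(y)W(x\beta(y))$. Then $\alpha(y)=\sum_n p_n(0)y^n/w_n$, and if $T_{h,W}(p_n/w_n)(x) = \sum_{k=0}^n \frac{d_{n-k}(h) p_k(x)}{w_{n-k}w_k}$, then $\sum_l d_l(h) y^l / w_l = W(h\beta(y))$. -/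
/-!
Evaluating the generating function at `x = 0` gives `α` (as `W(0) = 1`). For the translation
coefficients, evaluate `T_h (p_n)` at `0` in two ways: through the expansion of `T_h` in the basis
`{p_k}` it is the `n`-th coefficient of `α(y) · ∑ₗ dₗ(h) yˡ/wₗ` (up to the factor `w_n`), and
through the generating function, since `T_h (xᵏ)` takes the value `hᵏ` at `0`, it is the `n`-th
coefficient of `α(y) W(hβ(y))`. As `α ≠ 0`, it cancels from `α · D = α · W(hβ)`.
-/

open Polynomial Finset

namespace PowerSeries

variable {R : Type*} [CommRing R]

theorem coeff_pow_eq_zero_of_lt {β : R⟦X⟧} (hβ : constantCoeff β = 0) {m k : ℕ} (hmk : m < k) :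
    coeff m (β ^ k) = 0 :=
  coeff_of_lt_order m <| (Nat.cast_lt.2 hmk).trans_le (le_order_pow_of_constantCoeff_eq_zero k hβ)

/-- `∑ₗ c l • β ^ l`, which makes sense when `constantCoeff β = 0`: only `l ≤ m` contribute to the
`m`-th coefficient. -/
noncomputable def sumCoeffPow (c : ℕ → R) (β : R⟦X⟧) : R⟦X⟧ :=
  mk fun m => ∑ l ∈ range (m + 1), c l * coeff m (β ^ l)

theorem trunc_sumCoeffPow {β : R⟦X⟧} (hβ : constantCoeff β = 0) (c : ℕ → R) (n : ℕ) :
    trunc (n + 1) (sumCoeffPow c β) = trunc (n + 1) (∑ l ∈ range (n + 1), c l • β ^ l) := by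
  ext m
  simp only [coeff_trunc]
  split_ifs with hm
  · rw [sumCoeffPow, coeff_mk, map_sum]
    refine sum_subset (range_subset_range.2 (by omega)) fun l hl hlm => ?_
    rw [mem_range] at hl hlm
    rw [coeff_pow_eq_zero_of_lt hβ (by omega), mul_zero]
  · rfl

theorem coeff_mul_sumCoeffPow (α : R⟦X⟧) {β : R⟦X⟧} (hβ : constantCoeff β = 0) (c : ℕ → R)
    (n : ℕ) : coeff n (α * sumCoeffPow c β) = ∑ l ∈ range (n + 1), c l * coeff n (α * β ^ l) := by
  rw [← coeff_coe_trunc_of_lt n.lt_succ_self, ← trunc_mul_trunc, trunc_sumCoeffPow hβ,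
    trunc_mul_trunc, coeff_coe_trunc_of_lt n.lt_succ_self, mul_sum, map_sum]
  simp only [mul_smul_comm, coeff_smul, smul_eq_mul]

end PowerSeries

section Sheffer

open PowerSeries hiding X

variable {F : Type*} [Field F] {w : ℕ → F} {p : ℕ → F[X]} {α β : F⟦X⟧}

theorem eval_zero_of_generating (hw0 : w 0 = 1) (hw : ∀ n, w n ≠ 0)
    (hgen : ∀ n, (w n)⁻¹ • p n =
      ∑ k ∈ range (n + 1), (coeff n (α * β ^ k) / w k) • (X : F[X]) ^ k) (n : ℕ) :
    (p n).eval 0 = w n * coeff n α := by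
  have h := congrArg (eval 0) (hgen n)
  rw [eval_smul, eval_finsetSum, sum_eq_single 0 (fun k _ hk => by simp [hk]) (by simp)] at h
  simp only [pow_zero, mul_one, hw0, div_one, eval_smul, eval_one, smul_eq_mul] at h
  rw [← h, mul_inv_cancel_left₀ (hw n)]

theorem eval_zero_translate_X_pow (hw0 : w 0 = 1) (hw : ∀ n, w n ≠ 0) {T : F → F[X] →ₗ[F] F[X]}
    (hT : ∀ (h : F) (n : ℕ), T h (X ^ n) =
      ∑ k ∈ range (n + 1), (w n * h ^ (n - k) / (w (n - k) * w k)) • (X : F[X]) ^ k)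
    (h : F) (n : ℕ) : (T h (X ^ n)).eval 0 = h ^ n := by
  rw [hT, eval_finsetSum, sum_eq_single 0 (fun k _ hk => by simp [hk]) (by simp)]
  simp only [eval_smul, pow_zero, smul_eq_mul, eval_one, mul_one, Nat.sub_zero, hw0]
  field_simp [hw n]

theorem eval_zero_translate_eq_coeff_mul (hw : ∀ n, w n ≠ 0)
    (hp0 : ∀ n, (p n).eval 0 = w n * coeff n α) {T : F → F[X] →ₗ[F] F[X]} {d : ℕ → F[X]}
    (hd : ∀ (h : F) (n : ℕ), T h (p n) =
      ∑ k ∈ range (n + 1), (w n * (d (n - k)).eval h / (w (n - k) * w k)) • p k)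
    (h : F) (n : ℕ) :
    (T h (p n)).eval 0 = w n * coeff n (α * mk fun m => (d m).eval h / w m) := by
  rw [hd, eval_finsetSum, PowerSeries.coeff_mul, Nat.sum_antidiagonal_eq_sum_range_succ
    (fun i j => coeff i α * coeff j (mk fun m => (d m).eval h / w m)), mul_sum]
  refine sum_congr rfl fun k _ => ?_
  rw [eval_smul, hp0, coeff_mk, smul_eq_mul]
  field_simp [hw k, hw (n - k)]

theorem eval_zero_translate_eq_coeff_mul_sumCoeffPow (hw0 : w 0 = 1) (hw : ∀ n, w n ≠ 0)
    (hβ : constantCoeff β = 0)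
    (hgen : ∀ n, (w n)⁻¹ • p n =
      ∑ k ∈ range (n + 1), (coeff n (α * β ^ k) / w k) • (X : F[X]) ^ k)
    {T : F → F[X] →ₗ[F] F[X]}
    (hT : ∀ (h : F) (n : ℕ), T h (X ^ n) =
      ∑ k ∈ range (n + 1), (w n * h ^ (n - k) / (w (n - k) * w k)) • (X : F[X]) ^ k)
    (h : F) (n : ℕ) :
    (T h (p n)).eval 0 = w n * coeff n (α * sumCoeffPow (fun l => h ^ l / w l) β) := by
  have hpn : p n = w n • ((w n)⁻¹ • p n) := by rw [smul_inv_smul₀ (hw n)]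
  rw [hpn, hgen, coeff_mul_sumCoeffPow α hβ, map_smul, eval_smul, smul_eq_mul, map_sum,
    eval_finsetSum]
  congr 1
  refine sum_congr rfl fun k _ => ?_
  rw [map_smul, eval_smul, eval_zero_translate_X_pow hw0 hw hT, smul_eq_mul]
  ring

end Sheffer

theorem stmt8_general {F : Type*} [Field F] (w : ℕ → F) (hw0 : w 0 = 1)
    (hw : ∀ n, w n ≠ 0)
    (p : ℕ → F[X])
    -- the parameters `(α, β)` of the Sheffer sequence:
    (α β : PowerSeries F)
    (hα : PowerSeries.constantCoeff α ≠ 0)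
    (hβ0 : PowerSeries.coeff (R := F) 0 β = 0)
    -- `∑ₙ pₙ(x) yⁿ/wₙ = α(y) W(xβ(y))`, coefficientwise in `y`:
    (hgen : ∀ n, (w n)⁻¹ • p n =
      ∑ k ∈ Finset.range (n + 1),
        (PowerSeries.coeff (R := F) n (α * β ^ k) / w k) • (X : F[X]) ^ k)
    -- the `W`-translations
    (T : F → F[X] →ₗ[F] F[X])
    (hT : ∀ (h : F) (n : ℕ), T h (X ^ n) =
      ∑ k ∈ Finset.range (n + 1),
        (w n * h ^ (n - k) / (w (n - k) * w k)) • (X : F[X]) ^ k)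
    -- the coefficients `dₗ` of the translations in the basis `{pₖ}`:
    -- `T h (pₙ/wₙ) = ∑_{k ≤ n} d_{n-k}(h) pₖ/(w_{n-k} wₖ)`
    (d : ℕ → F[X])
    (hd : ∀ (h : F) (n : ℕ), T h (p n) =
      ∑ k ∈ Finset.range (n + 1),
        (w n * (d (n - k)).eval h / (w (n - k) * w k)) • p k) :
    -- conclusion (1): `α(y) = ∑ₙ pₙ(0) yⁿ/wₙ`
    (α = PowerSeries.mk fun n => (p n).eval 0 / w n) ∧
    -- conclusion (2): `∑ₗ dₗ(h) yˡ/wₗ = W(hβ(y))`, coefficientwise in `y`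
    (∀ (h : F) (n : ℕ), (d n).eval h / w n =
      ∑ l ∈ Finset.range (n + 1), h ^ l / w l * PowerSeries.coeff (R := F) n (β ^ l)) := by
  have hp0 := eval_zero_of_generating hw0 hw hgen
  have hβ : PowerSeries.constantCoeff β = 0 := by
    rwa [← PowerSeries.coeff_zero_eq_constantCoeff_apply]
  have hα0 : α ≠ 0 := fun h0 => hα (by rw [h0, map_zero])
  refine ⟨PowerSeries.ext fun n => by rw [PowerSeries.coeff_mk, hp0, mul_div_cancel_left₀ _ (hw n)],
    fun h n => ?_⟩
  have hD : (PowerSeries.mk fun m => (d m).eval h / w m) =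
      PowerSeries.sumCoeffPow (fun l => h ^ l / w l) β := by
    refine mul_left_cancel₀ hα0 (PowerSeries.ext fun m => mul_left_cancel₀ (hw m) ?_)
    rw [← eval_zero_translate_eq_coeff_mul hw hp0 hd,
      ← eval_zero_translate_eq_coeff_mul_sumCoeffPow hw0 hw hβ hgen hT]
  simpa [PowerSeries.sumCoeffPow] using congrArg (PowerSeries.coeff n) hD

/-- For a `W`-Sheffer sequence with `∑ₙ pₙ(x) yⁿ/wₙ = α(y) W(xβ(y))`:
`α(y) = ∑ₙ pₙ(0) yⁿ/wₙ`, and the series of translation coefficients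
`∑ₗ dₗ(h) yˡ/wₗ` equals `W(hβ(y))` (both equalities stated coefficientwise). -/
theorem stmt8 {F : Type*} [Field F] (w : ℕ → F) (hw0 : w 0 = 1)
    (hw : ∀ n, w n ≠ 0)
    (p : ℕ → F[X]) (hp : ∀ n, (p n).degree = n)
    -- the parameters `(α, β)` of the Sheffer sequence:
    (α β : PowerSeries F)
    (hα : PowerSeries.constantCoeff α ≠ 0)
    (hβ0 : PowerSeries.coeff (R := F) 0 β = 0) (hβ1 : PowerSeries.coeff (R := F) 1 β ≠ 0)
    -- `∑ₙ pₙ(x) yⁿ/wₙ = α(y) W(xβ(y))`, coefficientwise in `y`: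
    (hgen : ∀ n, (w n)⁻¹ • p n =
      ∑ k ∈ Finset.range (n + 1),
        (PowerSeries.coeff (R := F) n (α * β ^ k) / w k) • (X : F[X]) ^ k)
    -- the `W`-translations
    (T : F → F[X] →ₗ[F] F[X])
    (hT : ∀ (h : F) (n : ℕ), T h (X ^ n) =
      ∑ k ∈ Finset.range (n + 1),
        (w n * h ^ (n - k) / (w (n - k) * w k)) • (X : F[X]) ^ k)
    -- the coefficients `dₗ` of the translations in the basis `{pₖ}`:
    -- `T h (pₙ/wₙ) = ∑_{k ≤ n} d_{n-k}(h) pₖ/(w_{n-k} wₖ)`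
    (d : ℕ → F[X])
    (hd : ∀ (h : F) (n : ℕ), T h (p n) =
      ∑ k ∈ Finset.range (n + 1),
        (w n * (d (n - k)).eval h / (w (n - k) * w k)) • p k) :
    -- conclusion (1): `α(y) = ∑ₙ pₙ(0) yⁿ/wₙ`
    (α = PowerSeries.mk fun n => (p n).eval 0 / w n) ∧
    -- conclusion (2): `∑ₗ dₗ(h) yˡ/wₗ = W(hβ(y))`, coefficientwise in `y`
    (∀ (h : F) (n : ℕ), (d n).eval h / w n =
      ∑ l ∈ Finset.range (n + 1), h ^ l / w l * PowerSeries.coeff (R := F) n (β ^ l)) :=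
  stmt8_general w hw0 hw p α β hα hβ0 hgen T hT d hd
end

section
/- A linear operator on $\mathbb{F}[x]$ commutes with the weighted derivative $D_W$ if and only if it commutes with every $W$-translation $T_{h,W}$, $h\in\mathbb{F}$. -/
open Polynomial Finset
namespace Stmt11Aux
variable {F : Type*} [Field F]

noncomputable def uu (w : ℕ → F) : ℕ → F := fun l => if l = 0 then 0 else 1 / w l

noncomputable def vv (w : ℕ → F) : ℕ → ℕ → F
  | 0 => fun l => if l = 0 then 1 else 0
  | (k+1) => fun l => ∑ i ∈ Finset.range (l+1), uu w i * vv w k (l - i)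

lemma vv_zero (w : ℕ → F) (l) : vv w 0 l = if l = 0 then 1 else 0 := rfl
lemma vv_succ (w : ℕ → F) (k l) :
    vv w (k+1) l = ∑ i ∈ Finset.range (l+1), uu w i * vv w k (l - i) := rfl

lemma vv_eq_zero (w : ℕ → F) : ∀ k l, l < k → vv w k l = 0 := by
  intro k
  induction k with
  | zero => omega
  | succ k ih =>
    intro l hl
    rw [vv_succ]
    refine Finset.sum_eq_zero fun i hi => ?_
    rcases Nat.eq_zero_or_pos i with h0 | h0
    · simp [h0, uu]
    · rw [ih (l - i) (by simp at hi; omega), mul_zero]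

lemma vv_diag (w : ℕ → F) : ∀ k, vv w k k = (1 / w 1) ^ k := by
  intro k
  induction k with
  | zero => simp [vv_zero]
  | succ k ih =>
    rw [vv_succ, Finset.sum_eq_single 1]
    · simp [uu, ih, pow_succ, mul_comm]
    · intro i hi hne
      rcases Nat.eq_zero_or_pos i with h0 | h0
      · simp [h0, uu]
      · rw [vv_eq_zero w k (k + 1 - i) (by simp at hi; omega), mul_zero]
    · intro h; exact absurd (by simp) h

noncomputable def cc (w : ℕ → F) : ℕ → F
  | l =>
    if l = 0 then 0
    else (w 1) ^ l * ((if l = 1 then 1 else 0) -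
      ∑ k ∈ (Finset.range l).attach, cc w k.1 * vv w k.1 l)
  decreasing_by exact Finset.mem_range.mp k.2

lemma cc_zero (w : ℕ → F) : cc w 0 = 0 := by rw [cc]; simp

lemma cc_eq (w : ℕ → F) (l : ℕ) (hl : l ≠ 0) :
    cc w l = (w 1) ^ l * ((if l = 1 then 1 else 0) -
      ∑ k ∈ Finset.range l, cc w k * vv w k l) := by
  rw [cc, if_neg hl, ← Finset.sum_attach (Finset.range l) (fun k => cc w k * vv w k l)]

lemma cc_orth (w : ℕ → F) (hw : ∀ n, w n ≠ 0) (l : ℕ) :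
    ∑ k ∈ Finset.range (l + 1), cc w k * vv w k l = if l = 1 then 1 else 0 := by
  cases l with
  | zero => simp [cc_zero]
  | succ l =>
    rw [Finset.sum_range_succ, vv_diag, cc_eq w (l+1) (by omega)]
    have h1 : (w 1) ^ (l+1) * (1 / w 1) ^ (l+1) = 1 := by
      rw [← mul_pow, mul_one_div, div_self (hw 1), one_pow]
    rw [mul_right_comm, h1, one_mul]
    ring

lemma ext_of_powers (A B : F[X] →ₗ[F] F[X]) (h : ∀ k : ℕ, A (X ^ k) = B (X ^ k)) :
    A = B := by
  refine LinearMap.ext fun p => ?_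
  induction p using Polynomial.induction_on' with
  | add p q hp hq => simp [map_add, hp, hq]
  | monomial n a => rw [← smul_X_eq_monomial, map_smul, map_smul, h]

lemma agree_of_deg_le (A B : F[X] →ₗ[F] F[X]) (m : ℕ)
    (h : ∀ j ≤ m, A (X ^ j) = B (X ^ j)) (q : F[X]) (hq : q.natDegree ≤ m) :
    A q = B q := by
  rw [q.as_sum_range' (m + 1) (Nat.lt_succ_of_le hq), map_sum, map_sum]
  refine Finset.sum_congr rfl fun j hj => ?_
  rw [← smul_X_eq_monomial, map_smul, map_smul,
    h j (Nat.lt_succ_iff.mp (Finset.mem_range.mp hj))]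

lemma Dpow (w : ℕ → F) (hw : ∀ n, w n ≠ 0) (D : F[X] →ₗ[F] F[X]) (hD0 : D 1 = 0)
    (hD : ∀ n : ℕ, D (X ^ (n + 1)) = (w (n + 1) / w n) • (X : F[X]) ^ n) :
    ∀ l n : ℕ, (D ^ l) (X ^ n) =
      if l ≤ n then (w n / w (n - l)) • (X : F[X]) ^ (n - l) else 0 := by
  intro l
  induction l with
  | zero => intro n; simp [div_self (hw n)]
  | succ l ih =>
    intro n
    rw [pow_succ', Module.End.mul_apply, ih n]
    by_cases hln : l ≤ n
    · rw [if_pos hln]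
      rcases Nat.eq_or_lt_of_le hln with h | h
      · subst h
        simp [Nat.sub_self, hD0]
      · have h1 : l + 1 ≤ n := h
        rw [if_pos h1]
        have h2 : n - l = (n - (l + 1)) + 1 := by omega
        rw [map_smul, h2, hD, smul_smul]
        congr 1
        rw [div_mul_div_comm, mul_comm (w n) _, mul_div_mul_left _ _ (hw _)]
    · rw [if_neg hln, map_zero, if_neg (by omega)]

lemma TP (w : ℕ → F) (hw : ∀ n, w n ≠ 0) (D : F[X] →ₗ[F] F[X]) (hD0 : D 1 = 0)
    (hD : ∀ n : ℕ, D (X ^ (n + 1)) = (w (n + 1) / w n) • (X : F[X]) ^ n)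
    (h : F) (m j : ℕ) (hj : j ≤ m) :
    (∑ l ∈ Finset.range (m + 1), (h ^ l / w l) • D ^ l) (X ^ j : F[X]) =
      ∑ k ∈ Finset.range (j + 1),
        (w j * h ^ (j - k) / (w (j - k) * w k)) • (X : F[X]) ^ k := by
  rw [LinearMap.sum_apply]
  simp only [LinearMap.smul_apply, Dpow w hw D hD0 hD]
  rw [← Finset.sum_subset (Finset.range_subset_range.mpr (by omega : j + 1 ≤ m + 1))
    (fun l _ hl => by rw [if_neg (by simp at hl ⊢; omega), smul_zero])]
  rw [← Finset.sum_range_reflect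
    (fun k => (w j * h ^ (j - k) / (w (j - k) * w k)) • (X : F[X]) ^ k) (j + 1)]
  refine Finset.sum_congr rfl fun l hl => ?_
  have hlj : l ≤ j := by simp at hl; omega
  rw [if_pos hlj, smul_smul]
  have e1 : j + 1 - 1 - l = j - l := by omega
  have e2 : j - (j - l) = l := Nat.sub_sub_self hlj
  rw [e1, e2]
  congr 1
  rw [div_mul_div_comm]
  ring

lemma N_formula (w : ℕ → F) (hw0 : w 0 = 1) (hw : ∀ n, w n ≠ 0)
    (T : F → F[X] →ₗ[F] F[X])
    (hT : ∀ (h : F) (n : ℕ), T h (X ^ n) =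
      ∑ k ∈ Finset.range (n + 1),
        (w n * h ^ (n - k) / (w (n - k) * w k)) • (X : F[X]) ^ k) (n : ℕ) :
    T 1 (X ^ n : F[X]) - X ^ n =
      ∑ i ∈ Finset.range (n + 1), (w n * uu w (n - i) / w i) • (X : F[X]) ^ i := by
  rw [hT 1 n, Finset.sum_range_succ, Finset.sum_range_succ]
  have h1 : (w n * (1 : F) ^ (n - n) / (w (n - n) * w n)) = 1 := by
    simp [Nat.sub_self, hw0, div_self (hw n)]
  have h2 : uu w (n - n) = 0 := by simp [uu, Nat.sub_self]
  rw [h1, h2, one_smul, add_sub_cancel_right]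
  have h3 : (w n * (0 : F) / w n) • (X : F[X]) ^ n = 0 := by simp
  rw [h3, add_zero]
  refine Finset.sum_congr rfl fun k hk => ?_
  have hkn : k < n := Finset.mem_range.mp hk
  have h4 : uu w (n - k) = 1 / w (n - k) := by rw [uu, if_neg (by omega)]
  rw [h4, one_pow, mul_one, mul_one_div, div_div]

lemma Npow (w : ℕ → F) (hw : ∀ n, w n ≠ 0) (N : F[X] →ₗ[F] F[X])
    (hN : ∀ n : ℕ, N (X ^ n) =
      ∑ i ∈ Finset.range (n + 1), (w n * uu w (n - i) / w i) • (X : F[X]) ^ i) :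
    ∀ k n : ℕ, (N ^ k) (X ^ n) =
      ∑ i ∈ Finset.range (n + 1), (w n * vv w k (n - i) / w i) • (X : F[X]) ^ i := by
  intro k
  induction k with
  | zero =>
    intro n
    rw [pow_zero, Module.End.one_apply,
      Finset.sum_eq_single n
        (fun i hi hne => by
          rw [vv_zero, if_neg (by simp at hi; omega)]; simp)
        (fun hn => absurd (Finset.self_mem_range_succ n) hn)]
    simp [Nat.sub_self, vv_zero, div_self (hw n)]
  | succ k ih =>
    intro n
    rw [pow_succ, Module.End.mul_apply, hN n, map_sum]
    simp only [map_smul, ih, Finset.smul_sum, smul_smul]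
    have hco : ∀ i j : ℕ, (w n * uu w (n - i) / w i) * (w i * vv w k (i - j) / w j)
        = (w n / w j) * (uu w (n - i) * vv w k (i - j)) := by
      intro i j
      have h1 := hw i
      have h2 := hw j
      field_simp
    simp only [hco]
    have hext : ∀ i ∈ Finset.range (n + 1),
        (∑ j ∈ Finset.range (i + 1),
          ((w n / w j) * (uu w (n - i) * vv w k (i - j))) • (X : F[X]) ^ j)
        = ∑ j ∈ Finset.range (n + 1),
            if j ≤ i then ((w n / w j) * (uu w (n - i) * vv w k (i - j))) • (X : F[X]) ^ j
            else 0 := by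
      intro i hi
      have hi' : i + 1 ≤ n + 1 := by simp at hi; omega
      symm
      rw [← Finset.sum_subset (Finset.range_subset_range.mpr hi')
        (fun j _ hj => by rw [if_neg (by simp at hj; omega)])]
      refine Finset.sum_congr rfl fun j hj => ?_
      rw [if_pos (by simp at hj; omega)]
    rw [Finset.sum_congr rfl hext, Finset.sum_comm]
    refine Finset.sum_congr rfl fun j hj => ?_
    have hjn : j ≤ n := by simp at hj; omega
    have hfil : (Finset.range (n + 1)).filter (fun i => j ≤ i) = Finset.Ico j (n + 1) := by
      ext i; simp; omega
    rw [← Finset.sum_filter, hfil, Finset.sum_Ico_eq_sum_range]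
    have hrange : n + 1 - j = (n - j) + 1 := by omega
    rw [hrange, vv_succ, ← Finset.sum_smul]
    congr 1
    rw [mul_div_right_comm, Finset.mul_sum,
      ← Finset.sum_range_reflect
        (fun t => (w n / w j) * (uu w t * vv w k (n - j - t))) ((n - j) + 1)]
    refine Finset.sum_congr rfl fun t ht => ?_
    have htn : t ≤ n - j := by simp at ht; omega
    have e1 : n - j + 1 - 1 - t = n - j - t := by omega
    have e2 : n - (j + t) = n - j - t := by omega
    have e3 : j + t - j = t := by omega
    have e4 : n - j - (n - j - t) = t := Nat.sub_sub_self htn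
    rw [e1, e2, e3, e4]

lemma GD (w : ℕ → F) (hw : ∀ n, w n ≠ 0)
    (D : F[X] →ₗ[F] F[X]) (hD0 : D 1 = 0)
    (hD : ∀ n : ℕ, D (X ^ (n + 1)) = (w (n + 1) / w n) • (X : F[X]) ^ n)
    (N : F[X] →ₗ[F] F[X])
    (hN : ∀ n : ℕ, N (X ^ n) =
      ∑ i ∈ Finset.range (n + 1), (w n * uu w (n - i) / w i) • (X : F[X]) ^ i)
    (m j : ℕ) (hj : j ≤ m) :
    (∑ k ∈ Finset.range (m + 1), cc w k • N ^ k) (X ^ j : F[X]) = D (X ^ j) := by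
  rw [LinearMap.sum_apply]
  simp only [LinearMap.smul_apply, Npow w hw N hN]
  rw [← Finset.sum_subset (Finset.range_subset_range.mpr (by omega : j + 1 ≤ m + 1))
    (fun k _ hk => by
      rw [Finset.sum_eq_zero (fun i hi => by
        rw [vv_eq_zero w k (j - i) (by simp at hi hk ⊢; omega)]
        simp), smul_zero])]
  simp only [Finset.smul_sum, smul_smul]
  rw [Finset.sum_comm]
  have hco : ∀ k i : ℕ, cc w k * (w j * vv w k (j - i) / w i)
      = (w j / w i) * (cc w k * vv w k (j - i)) := by
    intro k i
    have h1 := hw i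
    field_simp
  simp only [hco]
  have hinner : ∀ i ∈ Finset.range (j + 1),
      (∑ k ∈ Finset.range (j + 1), ((w j / w i) * (cc w k * vv w k (j - i))) • (X : F[X]) ^ i)
      = ((w j / w i) * (if j - i = 1 then 1 else 0)) • (X : F[X]) ^ i := by
    intro i hi
    have hij : i ≤ j := by simp at hi; omega
    rw [← Finset.sum_smul, ← Finset.mul_sum]
    rw [← Finset.sum_subset (Finset.range_subset_range.mpr (by omega : (j - i) + 1 ≤ j + 1))
      (fun k _ hk => by rw [vv_eq_zero w k (j - i) (by simp at hk; omega), mul_zero])]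
    rw [cc_orth w hw (j - i)]
  rw [Finset.sum_congr rfl hinner]
  cases j with
  | zero =>
    simp [hD0]
  | succ s =>
    rw [Finset.sum_eq_single s
      (fun i hi hne => by
        rw [if_neg (by simp at hi; omega)]
        simp)
      (fun hs => absurd (Finset.mem_range.mpr (by omega)) hs)]
    rw [if_pos (by omega), mul_one, hD s]

end Stmt11Aux

open Stmt11Aux in
/-- A linear operator on `𝔽[x]` commutes with the weighted derivative `D_W`
iff it commutes with every `W`-translation `T_{h,W}`. -/
theorem stmt11 {F : Type*} [Field F] (w : ℕ → F) (hw0 : w 0 = 1)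
    (hw : ∀ n, w n ≠ 0)
    (D : F[X] →ₗ[F] F[X]) (hD0 : D 1 = 0)
    (hD : ∀ n : ℕ, D (X ^ (n + 1)) = (w (n + 1) / w n) • (X : F[X]) ^ n)
    (T : F → F[X] →ₗ[F] F[X])
    (hT : ∀ (h : F) (n : ℕ), T h (X ^ n) =
      ∑ k ∈ Finset.range (n + 1),
        (w n * h ^ (n - k) / (w (n - k) * w k)) • (X : F[X]) ^ k)
    (S : F[X] →ₗ[F] F[X]) :
    S ∘ₗ D = D ∘ₗ S ↔ ∀ h : F, S ∘ₗ T h = T h ∘ₗ S := by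
  constructor
  · intro hSD h
    have hc : Commute S D := by
      show S * D = D * S
      rw [Module.End.mul_eq_comp, Module.End.mul_eq_comp]
      exact hSD
    refine ext_of_powers _ _ fun n => ?_
    simp only [LinearMap.comp_apply]
    set m := max n (natDegree (S (X ^ n))) with hm
    have e1 : T h (X ^ n)
        = (∑ l ∈ Finset.range (m + 1), (h ^ l / w l) • D ^ l) (X ^ n : F[X]) :=
      (hT h n).trans (TP w hw D hD0 hD h m n (le_max_left _ _)).symm
    rw [e1, LinearMap.sum_apply, map_sum]
    simp only [LinearMap.smul_apply, map_smul]
    have e2 : ∀ l : ℕ, S ((D ^ l) (X ^ n)) = (D ^ l) (S (X ^ n)) := by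
      intro l
      have h2 := LinearMap.congr_fun ((hc.pow_right l) : S * D ^ l = D ^ l * S) (X ^ n)
      simpa [Module.End.mul_apply] using h2
    simp only [e2]
    have e3 := agree_of_deg_le (∑ l ∈ Finset.range (m + 1), (h ^ l / w l) • D ^ l)
      (T h) m (fun j hj => (TP w hw D hD0 hD h m j hj).trans (hT h j).symm)
      (S (X ^ n)) (le_max_right _ _)
    rw [← e3, LinearMap.sum_apply]
    simp only [LinearMap.smul_apply]
  · intro hTS
    set N : F[X] →ₗ[F] F[X] := T 1 - LinearMap.id with hNdef
    have hN : ∀ n : ℕ, N (X ^ n) =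
        ∑ i ∈ Finset.range (n + 1), (w n * uu w (n - i) / w i) • (X : F[X]) ^ i := by
      intro n
      rw [hNdef, LinearMap.sub_apply, LinearMap.id_apply]
      exact N_formula w hw0 hw T hT n
    have hc : Commute S N := by
      have h1 : Commute S (T 1) := by
        show S * T 1 = T 1 * S
        rw [Module.End.mul_eq_comp, Module.End.mul_eq_comp]
        exact hTS 1
      have hNe : N = T 1 - 1 := by rw [hNdef, Module.End.one_eq_id]
      rw [hNe]
      exact h1.sub_right (Commute.one_right S)
    refine ext_of_powers _ _ fun n => ?_
    simp only [LinearMap.comp_apply]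
    set m := max n (natDegree (S (X ^ n))) with hm
    have e1 : D (X ^ n : F[X])
        = (∑ k ∈ Finset.range (m + 1), cc w k • N ^ k) (X ^ n : F[X]) :=
      (GD w hw D hD0 hD N hN m n (le_max_left _ _)).symm
    rw [e1, LinearMap.sum_apply, map_sum]
    simp only [LinearMap.smul_apply, map_smul]
    have e2 : ∀ k : ℕ, S ((N ^ k) (X ^ n)) = (N ^ k) (S (X ^ n)) := by
      intro k
      have h2 := LinearMap.congr_fun ((hc.pow_right k) : S * N ^ k = N ^ k * S) (X ^ n)
      simpa [Module.End.mul_apply] using h2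
    simp only [e2]
    have e3 := agree_of_deg_le (∑ k ∈ Finset.range (m + 1), cc w k • N ^ k) D m
      (fun j hj => GD w hw D hD0 hD N hN m j hj) (S (X ^ n)) (le_max_right _ _)
    rw [← e3, LinearMap.sum_apply]
    simp only [LinearMap.smul_apply]
end

section
/- Let $S$ be a linear operator on $\mathbb{F}[x]$. The map $\varphi \mapsto \varphi\circ S$ on $\mathbb{F}[x]^*$ equals $\cdot_W$-multiplication by some fixed functional $\psi$ if and only if $S$ does not increase degrees and commutes with $D_W$; in that case $\psi = \varepsilon_0 \circ S$ (where $\varepsilon_0$ is evaluation at $0$), and for $S=T_{h,W}$ one gets $\psi=\varepsilon_h$, evaluation at $h$. -/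
open Polynomial

/-!
Work in the basis `bₙ = xⁿ/wₙ`, in which `D_W bₙ₊₁ = bₙ` and `D_W b₀ = 0`. Since the functionals
separate polynomials, `φ ∘ S = φ ·_W ψ` for all `φ` says exactly that
`S bₙ = ∑_{k ≤ n} ψ(b_{n-k}) b_k`; such a "convolution" operator does not raise degrees and commutes
with `D_W`, because `D_W` shifts the basis. Conversely, a polynomial is determined by its image
under `D_W` and its value at `0`, so by induction on `n` an operator commuting with `D_W` is the
convolution with `ε₀ ∘ S`. Evaluating the convolution formula at `0` recovers `ψ = ε₀ ∘ S`, and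
for `T_{h,W}` the coefficients are `ε_h(b_j) = hʲ/w_j`.
-/

/-- `χ = φ ·_W ψ`, i.e. `χ(xⁿ/wₙ) = ∑_{k ≤ n} φ(xᵏ/wₖ) ψ(x^{n-k}/w_{n-k})`. -/
def mulProp {F : Type*} [Field F] (w : ℕ → F)
    (φ ψ χ : F[X] →ₗ[F] F) : Prop :=
  ∀ n : ℕ, χ ((w n)⁻¹ • X ^ n) =
    ∑ k ∈ Finset.range (n + 1),
      φ ((w k)⁻¹ • X ^ k) * ψ ((w (n - k))⁻¹ • X ^ (n - k))

theorem degree_map_le_of_degree_X_pow_le {R : Type*} [Semiring R] {S : R[X] →ₗ[R] R[X]}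
    (h : ∀ n : ℕ, (S (X ^ n)).degree ≤ n) (p : R[X]) : (S p).degree ≤ p.degree := by
  have hp : S p = ∑ i ∈ p.support, p.coeff i • S (X ^ i) := by
    conv_lhs => rw [p.as_sum_support]
    simp only [map_sum, ← smul_X_eq_monomial, map_smul]
  rw [hp]
  refine (degree_sum_le _ _).trans (Finset.sup_le fun i hi => ?_)
  exact (degree_smul_le _ _).trans ((h i).trans (le_degree_of_mem_supp i hi))

noncomputable section WeightedBasis

variable {F : Type*} [Field F]

def scaledPow (w : ℕ → F) (n : ℕ) : F[X] := (w n)⁻¹ • X ^ n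

def convPoly (w : ℕ → F) (ψ : F[X] →ₗ[F] F) (n : ℕ) : F[X] :=
  ∑ k ∈ Finset.range (n + 1), ψ (scaledPow w (n - k)) • scaledPow w k

structure IsWeightedDeriv (w : ℕ → F) (D : F[X] →ₗ[F] F[X]) : Prop where
  map_one : D 1 = 0
  map_X_pow_succ : ∀ n : ℕ, D (X ^ (n + 1)) = (w (n + 1) / w n) • (X : F[X]) ^ n

variable {w : ℕ → F}

theorem mulProp_comp_iff (S : F[X] →ₗ[F] F[X]) (ψ : F[X] →ₗ[F] F) :
    (∀ φ : F[X] →ₗ[F] F, mulProp w φ ψ (φ ∘ₗ S)) ↔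
      ∀ n, S (scaledPow w n) = convPoly w ψ n := by
  have hφ : ∀ φ : F[X] →ₗ[F] F, mulProp w φ ψ (φ ∘ₗ S) ↔
      ∀ n, φ (S (scaledPow w n) - convPoly w ψ n) = 0 := by
    intro φ
    refine forall_congr' fun n => ?_
    simp only [convPoly, map_sub, map_sum, map_smul, smul_eq_mul, LinearMap.comp_apply,
      sub_eq_zero, scaledPow, mul_comm]
  simp_rw [hφ, ← sub_eq_zero (a := S (scaledPow w _))]
  rw [forall_comm]
  exact forall_congr' fun n => Module.forall_dual_apply_eq_zero_iff F _

theorem degree_scaledPow_le (n : ℕ) : (scaledPow w n).degree ≤ n :=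
  (degree_smul_le _ _).trans (degree_X_pow_le n)

theorem scaledPow_zero (hw0 : w 0 = 1) : scaledPow w 0 = 1 := by
  simp [scaledPow, hw0]

theorem eval_zero_scaledPow_succ (n : ℕ) : (scaledPow w (n + 1)).eval 0 = 0 := by
  simp [scaledPow]

theorem lhom_ext_scaledPow (hw : ∀ n, w n ≠ 0) {M : Type*} [AddCommMonoid M] [Module F M]
    {f g : F[X] →ₗ[F] M} (h : ∀ n, f (scaledPow w n) = g (scaledPow w n)) : f = g := by
  refine lhom_ext' fun n => LinearMap.ext_ring ?_
  have hX : monomial n (1 : F) = w n • scaledPow w n := by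
    rw [scaledPow, smul_smul, mul_inv_cancel₀ (hw n), one_smul, X_pow_eq_monomial]
  simp [hX, h]

theorem degree_convPoly_le (ψ : F[X] →ₗ[F] F) (n : ℕ) : (convPoly w ψ n).degree ≤ n := by
  refine (degree_sum_le _ _).trans (Finset.sup_le fun k hk => ?_)
  refine (degree_smul_le _ _).trans ((degree_scaledPow_le k).trans ?_)
  exact_mod_cast Nat.lt_succ_iff.mp (Finset.mem_range.mp hk)

theorem eval_zero_convPoly (hw0 : w 0 = 1) (ψ : F[X] →ₗ[F] F) (n : ℕ) :
    (convPoly w ψ n).eval 0 = ψ (scaledPow w n) := by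
  simp [convPoly, eval_finsetSum, Finset.sum_range_succ', eval_zero_scaledPow_succ,
    scaledPow_zero hw0]

namespace IsWeightedDeriv

variable {D : F[X] →ₗ[F] F[X]}

theorem coeff_apply (hD : IsWeightedDeriv w D) (p : F[X]) (n : ℕ) :
    (D p).coeff n = w (n + 1) / w n * p.coeff (n + 1) := by
  have h : lcoeff F n ∘ₗ D = (w (n + 1) / w n) • lcoeff F (n + 1) := by
    refine lhom_ext' fun m => LinearMap.ext_ring ?_
    cases m with
    | zero => simp [hD.map_one, coeff_one]
    | succ m =>
      simp only [LinearMap.comp_apply, ← X_pow_eq_monomial, hD.map_X_pow_succ]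
      by_cases hnm : n = m <;> simp [hnm, coeff_X_pow]
  exact LinearMap.congr_fun h p

theorem apply_scaledPow_zero (hD : IsWeightedDeriv w D) : D (scaledPow w 0) = 0 := by
  simp [scaledPow, hD.map_one]

theorem apply_scaledPow_succ (hw : ∀ n, w n ≠ 0) (hD : IsWeightedDeriv w D) (n : ℕ) :
    D (scaledPow w (n + 1)) = scaledPow w n := by
  simp only [scaledPow, map_smul, hD.map_X_pow_succ, smul_smul]
  congr 1
  field_simp [hw]

theorem eq_of_apply_eq_of_eval_zero_eq (hw : ∀ n, w n ≠ 0) (hD : IsWeightedDeriv w D)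
    {p q : F[X]} (hDpq : D p = D q) (h0 : p.eval 0 = q.eval 0) : p = q := by
  ext n
  cases n with
  | zero => simpa [coeff_zero_eq_eval_zero] using h0
  | succ n =>
    have h := congrArg (coeff · n) hDpq
    simp only [hD.coeff_apply] at h
    exact mul_left_cancel₀ (div_ne_zero (hw _) (hw _)) h

theorem apply_convPoly_zero (hD : IsWeightedDeriv w D) (ψ : F[X] →ₗ[F] F) :
    D (convPoly w ψ 0) = 0 := by
  simp [convPoly, hD.apply_scaledPow_zero]

theorem apply_convPoly_succ (hw : ∀ n, w n ≠ 0) (hD : IsWeightedDeriv w D)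
    (ψ : F[X] →ₗ[F] F) (n : ℕ) : D (convPoly w ψ (n + 1)) = convPoly w ψ n := by
  simp [convPoly, Finset.sum_range_succ' _ (n + 1), hD.apply_scaledPow_zero,
    hD.apply_scaledPow_succ hw]

theorem comp_comm_of_apply_scaledPow (hw : ∀ n, w n ≠ 0) (hD : IsWeightedDeriv w D)
    {S : F[X] →ₗ[F] F[X]} {ψ : F[X] →ₗ[F] F} (hS : ∀ n, S (scaledPow w n) = convPoly w ψ n) :
    S ∘ₗ D = D ∘ₗ S := by
  refine lhom_ext_scaledPow hw fun n => ?_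
  cases n with
  | zero => simp [hS, hD.apply_scaledPow_zero, hD.apply_convPoly_zero]
  | succ n => simp [hS, hD.apply_scaledPow_succ hw, hD.apply_convPoly_succ hw]

theorem apply_scaledPow_of_comp_comm (hw0 : w 0 = 1) (hw : ∀ n, w n ≠ 0)
    (hD : IsWeightedDeriv w D) {S : F[X] →ₗ[F] F[X]} (hS : S ∘ₗ D = D ∘ₗ S) (n : ℕ) :
    S (scaledPow w n) = convPoly w (leval 0 ∘ₗ S) n := by
  refine hD.eq_of_apply_eq_of_eval_zero_eq hw ?_ (by simp [eval_zero_convPoly hw0])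
  rw [← LinearMap.comp_apply D S, ← hS, LinearMap.comp_apply]
  cases n with
  | zero => rw [hD.apply_scaledPow_zero, map_zero, hD.apply_convPoly_zero]
  | succ n =>
    rw [hD.apply_scaledPow_succ hw, hD.apply_convPoly_succ hw,
      apply_scaledPow_of_comp_comm hw0 hw hD hS n]

end IsWeightedDeriv

theorem degree_apply_le_of_apply_scaledPow (hw : ∀ n, w n ≠ 0) {S : F[X] →ₗ[F] F[X]}
    {ψ : F[X] →ₗ[F] F} (hS : ∀ n, S (scaledPow w n) = convPoly w ψ n) (p : F[X]) :
    (S p).degree ≤ p.degree := by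
  refine degree_map_le_of_degree_X_pow_le (fun n => ?_) p
  have hX : (X : F[X]) ^ n = w n • scaledPow w n := by
    rw [scaledPow, smul_smul, mul_inv_cancel₀ (hw n), one_smul]
  rw [hX, map_smul, hS]
  exact (degree_smul_le _ _).trans (degree_convPoly_le ψ n)

theorem eq_leval_zero_comp_of_apply_scaledPow (hw0 : w 0 = 1) (hw : ∀ n, w n ≠ 0)
    {S : F[X] →ₗ[F] F[X]} {ψ : F[X] →ₗ[F] F} (hS : ∀ n, S (scaledPow w n) = convPoly w ψ n) :
    ψ = leval 0 ∘ₗ S :=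
  lhom_ext_scaledPow hw fun n => by simp [hS, eval_zero_convPoly hw0]

theorem apply_scaledPow_of_translation (hw : ∀ n, w n ≠ 0) (h : F) {T : F[X] →ₗ[F] F[X]}
    (hT : ∀ n : ℕ, T (X ^ n) = ∑ k ∈ Finset.range (n + 1),
      (w n * h ^ (n - k) / (w (n - k) * w k)) • (X : F[X]) ^ k) (n : ℕ) :
    T (scaledPow w n) = convPoly w (leval h) n := by
  simp only [scaledPow, convPoly, map_smul, hT, Finset.smul_sum, smul_smul, leval_apply,
    eval_pow, eval_X, smul_eq_mul]
  refine Finset.sum_congr rfl fun k _ => ?_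
  congr 1
  field_simp [hw n, hw k, hw (n - k)]

end WeightedBasis

/-- For a linear operator `S` on `𝔽[x]`, the map `φ ↦ φ ∘ S` on `𝔽[x]*` is
`·_W`-multiplication by a fixed functional `ψ` iff `S` does not increase
degrees and commutes with `D_W`; then `ψ = ε₀ ∘ S`, and for `S = T_{h,W}` one
gets `ψ = ε_h`. -/
theorem stmt13 {F : Type*} [Field F] (w : ℕ → F) (hw0 : w 0 = 1)
    (hw : ∀ n, w n ≠ 0)
    (D : F[X] →ₗ[F] F[X]) (hD0 : D 1 = 0)
    (hD : ∀ n : ℕ, D (X ^ (n + 1)) = (w (n + 1) / w n) • (X : F[X]) ^ n) :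
    -- the characterization, and the formula `ψ = ε₀ ∘ S`
    (∀ S : F[X] →ₗ[F] F[X],
      ((∃ ψ : F[X] →ₗ[F] F, ∀ φ : F[X] →ₗ[F] F, mulProp w φ ψ (φ ∘ₗ S)) ↔
        ((∀ p : F[X], (S p).degree ≤ p.degree) ∧ S ∘ₗ D = D ∘ₗ S)) ∧
      (∀ ψ : F[X] →ₗ[F] F, (∀ φ : F[X] →ₗ[F] F, mulProp w φ ψ (φ ∘ₗ S)) →
        ψ = (Polynomial.leval (0 : F)) ∘ₗ S)) ∧
    -- for `S = T_{h,W}` the functional is evaluation at `h`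
    (∀ (h : F) (T : F[X] →ₗ[F] F[X]),
      (∀ n : ℕ, T (X ^ n) =
        ∑ k ∈ Finset.range (n + 1),
          (w n * h ^ (n - k) / (w (n - k) * w k)) • (X : F[X]) ^ k) →
      ∀ φ : F[X] →ₗ[F] F, mulProp w φ (Polynomial.leval h) (φ ∘ₗ T)) := by
  have hWD : IsWeightedDeriv w D := ⟨hD0, hD⟩
  refine ⟨fun S => ⟨⟨?_, ?_⟩, fun ψ hψ => ?_⟩, fun h T hT => ?_⟩
  · rintro ⟨ψ, hψ⟩
    rw [mulProp_comp_iff] at hψ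
    exact ⟨degree_apply_le_of_apply_scaledPow hw hψ, hWD.comp_comm_of_apply_scaledPow hw hψ⟩
  · rintro ⟨-, hcomm⟩
    exact ⟨_, (mulProp_comp_iff S _).2 (hWD.apply_scaledPow_of_comp_comm hw0 hw hcomm)⟩
  · exact eq_leval_zero_comp_of_apply_scaledPow hw0 hw ((mulProp_comp_iff S ψ).1 hψ)
  · exact (mulProp_comp_iff T _).2 (apply_scaledPow_of_translation hw h hT)
end

section
/- A graded sequence $\{p_n\}$ is $W$-Sheffer if and only if there exists a graded sequence $\{d_l\}$ of polynomials such that $(\varphi\cdot_W\psi)(p_n/w_n) = \sum_{k=0}^n \varphi(p_k/w_k)\,\psi(d_{n-k}/w_{n-k})$ for all linear functionals $\varphi,\psi \in \mathbb{F}[x]^*$. -/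
open Polynomial

/-!
Write `eₙ = xⁿ/wₙ`, `Pₙ = pₙ/wₙ`, and identify a functional `φ` with the series `∑ φ(eₙ) tⁿ`.
Then `·_W` is multiplication of series, and `φ ·_W ψ = φ ∘ ψ(D)`, where `a(D) : eₙ ↦ ∑ aᵢ eₙ₋ᵢ`
is the Toeplitz operator of the shift `D : eₙ ↦ eₙ₋₁`; likewise `T_h = E_h(D)` with
`E_h = ∑ hʲ/wⱼ tʲ`, and `Q` is the shift of the basis `P`. An operator commutes with a shift iff it
is Toeplitz for that basis, so the identity for `d` says exactly that every `ψ(D)` is Toeplitz in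
the basis `P` with symbol `∑ ψ(d_l/w_l) tˡ`.

If `Q` commutes with `T₁`, it commutes with `D` (since `E₁ - 1/w₀` is `t` times a unit), hence
with every `ψ(D)`, which is therefore `P`-Toeplitz. Its symbol is read off through the symmetry
`θ(ψ(D) v) = ψ(θ(D) v)` with `θ` the `P₀`-coordinate, giving `d_l = θ(D) p_l`. Conversely, the
identity for `ψ = eval_h` makes `T_h` Toeplitz in the basis `P`, so it commutes with `Q`.
-/

open Finset

namespace Module.Basis

variable {R V : Type*} [CommRing R] [AddCommGroup V] [Module R V] (b : Module.Basis ℕ R V)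

/-- The operator `a(S)` of the shift `S = b.toeplitz X : b (n + 1) ↦ b n`. -/
noncomputable def toeplitz (a : PowerSeries R) : Module.End R V :=
  b.constr R fun n => ∑ ik ∈ antidiagonal n, PowerSeries.coeff ik.1 a • b ik.2

lemma toeplitz_basis (a : PowerSeries R) (n : ℕ) :
    b.toeplitz a (b n) = ∑ ik ∈ antidiagonal n, PowerSeries.coeff ik.1 a • b ik.2 :=
  b.constr_basis R _ n

noncomputable def dualSeries : Module.Dual R V →ₗ[R] PowerSeries R where
  toFun φ := PowerSeries.mk fun n => φ (b n)
  map_add' φ ψ := by ext; simp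
  map_smul' r φ := by ext; simp

@[simp]
lemma coeff_dualSeries (φ : Module.Dual R V) (n : ℕ) :
    PowerSeries.coeff n (b.dualSeries φ) = φ (b n) := by
  simp [dualSeries]

lemma dualSeries_injective : Function.Injective b.dualSeries := fun φ ψ h =>
  b.ext fun n => by simpa using congr(PowerSeries.coeff n $h)

lemma dualSeries_coord (k : ℕ) : b.dualSeries (b.coord k) = PowerSeries.X ^ k := by
  ext n
  simp [PowerSeries.coeff_X_pow, Finsupp.single_apply]

lemma dualSeries_comp_toeplitz (φ : Module.Dual R V) (a : PowerSeries R) :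
    b.dualSeries (φ ∘ₗ b.toeplitz a) = a * b.dualSeries φ := by
  ext n
  simp [toeplitz_basis, PowerSeries.coeff_mul]

lemma ext_dualSeries_comp {A B : Module.End R V}
    (h : ∀ φ : Module.Dual R V, b.dualSeries (φ ∘ₗ A) = b.dualSeries (φ ∘ₗ B)) : A = B :=
  LinearMap.ext fun v => b.ext_elem fun i => by
    simpa using congr($(b.dualSeries_injective (h (b.coord i))) v)

lemma toeplitz_mul (a c : PowerSeries R) :
    b.toeplitz (a * c) = b.toeplitz a * b.toeplitz c :=
  b.ext_dualSeries_comp fun φ => by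
    rw [Module.End.mul_eq_comp, ← LinearMap.comp_assoc, dualSeries_comp_toeplitz,
      dualSeries_comp_toeplitz, dualSeries_comp_toeplitz, mul_comm a, mul_assoc]

lemma toeplitz_one : b.toeplitz 1 = 1 :=
  b.ext_dualSeries_comp fun φ => by
    rw [dualSeries_comp_toeplitz, one_mul, Module.End.one_eq_id, LinearMap.comp_id]

lemma toeplitz_add (a c : PowerSeries R) :
    b.toeplitz (a + c) = b.toeplitz a + b.toeplitz c :=
  b.ext_dualSeries_comp fun φ => by
    rw [LinearMap.comp_add, map_add, dualSeries_comp_toeplitz, dualSeries_comp_toeplitz,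
      dualSeries_comp_toeplitz, add_mul]

lemma toeplitz_C (r : R) : b.toeplitz (PowerSeries.C r) = r • 1 :=
  b.ext_dualSeries_comp fun φ => by
    rw [dualSeries_comp_toeplitz, LinearMap.comp_smul, Module.End.one_eq_id, LinearMap.comp_id,
      map_smul, PowerSeries.smul_eq_C_mul]

lemma commute_toeplitz (a c : PowerSeries R) : Commute (b.toeplitz a) (b.toeplitz c) := by
  rw [commute_iff_eq, ← toeplitz_mul, ← toeplitz_mul, mul_comm]

lemma toeplitz_injective {a : PowerSeries R} (ha : IsUnit (PowerSeries.constantCoeff a)) :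
    Function.Injective (b.toeplitz a) := by
  obtain ⟨c, hc⟩ := (PowerSeries.isUnit_iff_constantCoeff.mpr ha).exists_left_inv
  intro u v huv
  simpa [← Module.End.mul_apply, ← toeplitz_mul, hc, toeplitz_one] using congr(b.toeplitz c $huv)

lemma comp_toeplitz_dualSeries_comm (φ ψ : Module.Dual R V) :
    φ ∘ₗ b.toeplitz (b.dualSeries ψ) = ψ ∘ₗ b.toeplitz (b.dualSeries φ) :=
  b.dualSeries_injective <| by rw [dualSeries_comp_toeplitz, dualSeries_comp_toeplitz, mul_comm]

lemma apply_toeplitz_basis (φ : Module.Dual R V) (a : PowerSeries R) (n : ℕ) :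
    φ (b.toeplitz a (b n)) = ∑ k ∈ range (n + 1), φ (b k) * PowerSeries.coeff (n - k) a := by
  have h := congr(PowerSeries.coeff n $(b.dualSeries_comp_toeplitz φ a))
  rw [coeff_dualSeries, PowerSeries.coeff_mul, ← Nat.sum_antidiagonal_swap,
    Nat.sum_antidiagonal_eq_sum_range_succ_mk] at h
  simpa [mul_comm] using h

lemma eq_toeplitz_iff {A : Module.End R V} {a : PowerSeries R} :
    A = b.toeplitz a ↔ ∀ (φ : Module.Dual R V) (n : ℕ),
      φ (A (b n)) = ∑ k ∈ range (n + 1), φ (b k) * PowerSeries.coeff (n - k) a := by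
  refine ⟨fun h φ n => h ▸ b.apply_toeplitz_basis φ a n, fun h => b.ext fun n => ?_⟩
  refine b.ext_elem fun i => ?_
  have hi := h (b.coord i) n
  rwa [← b.apply_toeplitz_basis, coord_apply, coord_apply] at hi

lemma repr_toeplitz_X (v : V) (k : ℕ) :
    b.repr (b.toeplitz PowerSeries.X v) k = b.repr v (k + 1) := by
  have h : b.coord k ∘ₗ b.toeplitz PowerSeries.X = b.coord (k + 1) := b.dualSeries_injective <| by
    rw [dualSeries_comp_toeplitz, dualSeries_coord, dualSeries_coord, pow_succ']
  simpa using congr($h v)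

lemma repr_toeplitz_X_pow (n : ℕ) (v : V) (k : ℕ) :
    b.repr ((b.toeplitz PowerSeries.X ^ n) v) k = b.repr v (k + n) := by
  induction n generalizing k with
  | zero => rfl
  | succ n ih =>
    rw [pow_succ', Module.End.mul_apply, repr_toeplitz_X, ih, add_right_comm, add_assoc]

lemma toeplitz_X_basis_zero : b.toeplitz PowerSeries.X (b 0) = 0 :=
  b.ext_elem fun k => by simp [repr_toeplitz_X]

lemma toeplitz_X_basis_succ (n : ℕ) : b.toeplitz PowerSeries.X (b (n + 1)) = b n :=
  b.ext_elem fun k => by simp [repr_toeplitz_X, Finsupp.single_apply]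

lemma toeplitz_X_pow_basis_of_lt {n k : ℕ} (hk : k < n) :
    (b.toeplitz PowerSeries.X ^ n) (b k) = 0 :=
  b.ext_elem fun i => by simp [repr_toeplitz_X_pow, Finsupp.single_apply]; omega

lemma toeplitz_X_pow_apply_eq_zero_iff {n : ℕ} {v : V} :
    (b.toeplitz PowerSeries.X ^ n) v = 0 ↔ v ∈ Submodule.span R (b '' Set.Iio n) := by
  rw [b.mem_span_image, b.ext_elem_iff]
  simp only [repr_toeplitz_X_pow, map_zero, Finsupp.coe_zero, Pi.zero_apply]
  constructor
  · intro h k hk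
    by_contra hkn
    obtain ⟨i, rfl⟩ := Nat.exists_eq_add_of_le (not_lt.mp hkn)
    exact Finsupp.mem_support_iff.mp hk (by simpa [add_comm] using h i)
  · intro h i
    by_contra hi
    exact absurd (h (Finsupp.mem_support_iff.mpr hi)) (by simp)

lemma eq_zero_of_toeplitz_X_apply_eq_zero {v : V} (h : b.toeplitz PowerSeries.X v = 0)
    (h0 : b.repr v 0 = 0) : v = 0 :=
  b.ext_elem fun k => by
    cases k with
    | zero => simpa using h0
    | succ k => simpa [repr_toeplitz_X] using congr(b.repr $h k)

lemma repr_toeplitz_basis_zero (a : PowerSeries R) (n : ℕ) :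
    b.repr (b.toeplitz a (b n)) 0 = PowerSeries.coeff n a := by
  simpa [dualSeries_coord] using
    congr(PowerSeries.coeff n $(b.dualSeries_comp_toeplitz (b.coord 0) a))

lemma eq_toeplitz_of_commute {A : Module.End R V} (hA : Commute (b.toeplitz PowerSeries.X) A) :
    A = b.toeplitz (PowerSeries.mk fun n => b.repr (A (b n)) 0) := by
  set D := A - b.toeplitz (PowerSeries.mk fun n => b.repr (A (b n)) 0)
  have hD : Commute (b.toeplitz PowerSeries.X) D := hA.sub_right (b.commute_toeplitz _ _)
  have hD0 (n : ℕ) : b.repr (D (b n)) 0 = 0 := by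
    simp [D, repr_toeplitz_basis_zero]
  rw [← sub_eq_zero]
  refine b.ext fun n => ?_
  induction n with
  | zero =>
    refine b.eq_zero_of_toeplitz_X_apply_eq_zero ?_ (hD0 0)
    rw [← Module.End.mul_apply, hD.eq, Module.End.mul_apply, toeplitz_X_basis_zero, map_zero]
  | succ n ih =>
    refine b.eq_zero_of_toeplitz_X_apply_eq_zero ?_ (hD0 (n + 1))
    rw [← Module.End.mul_apply, hD.eq, Module.End.mul_apply, toeplitz_X_basis_succ]
    exact ih

lemma toeplitz_dualSeries_eq_toeplitz_of_commute (c : Module.Basis ℕ R V)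
    (hc : Commute (c.toeplitz PowerSeries.X) (b.toeplitz PowerSeries.X)) (ψ : Module.Dual R V) :
    b.toeplitz (b.dualSeries ψ) =
      c.toeplitz (PowerSeries.mk fun l => ψ (b.toeplitz (b.dualSeries (c.coord 0)) (c l))) := by
  have hψ : Commute (c.toeplitz PowerSeries.X) (b.toeplitz (b.dualSeries ψ)) := by
    rw [b.eq_toeplitz_of_commute hc.symm]
    exact b.commute_toeplitz _ _
  rw [c.eq_toeplitz_of_commute hψ]
  congr 2
  funext l
  simpa using congr($(b.comp_toeplitz_dualSeries_comm (c.coord 0) ψ) (c l))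

lemma toeplitz_apply_eq_toeplitz_shift (a : PowerSeries R) (v : V) :
    b.toeplitz a v = b.toeplitz (PowerSeries.mk fun p => PowerSeries.coeff (p + 1) a)
      (b.toeplitz PowerSeries.X v) + PowerSeries.constantCoeff a • v := by
  conv_lhs => rw [a.eq_shift_mul_X_add_const]
  rw [toeplitz_add, toeplitz_mul, toeplitz_C]
  rfl

lemma toeplitz_X_pow_apply_toeplitz_X_eq_zero {n : ℕ} {v : V}
    (hv : (b.toeplitz PowerSeries.X ^ (n + 1)) v = 0) :
    (b.toeplitz PowerSeries.X ^ n) (b.toeplitz PowerSeries.X v) = 0 := by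
  rwa [← Module.End.mul_apply, ← pow_succ]

lemma apply_toeplitz_of_commute_on_ker {A : Module.End R V} {m : ℕ}
    (hA : ∀ z, (b.toeplitz PowerSeries.X ^ m) z = 0 →
      A (b.toeplitz PowerSeries.X z) = b.toeplitz PowerSeries.X (A z))
    (a : PowerSeries R) {z : V} (hz : (b.toeplitz PowerSeries.X ^ m) z = 0) :
    A (b.toeplitz a z) = b.toeplitz a (A z) := by
  induction m generalizing a z with
  | zero => simp_all
  | succ m ih =>
    have hA' (y : V) (hy : (b.toeplitz PowerSeries.X ^ m) y = 0) :
        A (b.toeplitz PowerSeries.X y) = b.toeplitz PowerSeries.X (A y) :=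
      hA y (by rw [pow_succ', Module.End.mul_apply, hy, map_zero])
    rw [toeplitz_apply_eq_toeplitz_shift, toeplitz_apply_eq_toeplitz_shift b a (A z), map_add,
      map_smul, ih hA' _ (b.toeplitz_X_pow_apply_toeplitz_X_eq_zero hz), hA z hz]

/-- Write `f(S) = g(S) S + f₀` with `g(S)` invertible and induct along the kernels of `Sⁿ`,
which exhaust `V`. -/
lemma commute_toeplitz_X_of_commute {A : Module.End R V} {f : PowerSeries R}
    (hf : IsUnit (PowerSeries.coeff 1 f)) (hA : Commute A (b.toeplitz f)) :
    Commute A (b.toeplitz PowerSeries.X) := by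
  set g := PowerSeries.mk fun p => PowerSeries.coeff (p + 1) f
  have hg : IsUnit (PowerSeries.constantCoeff g) := by
    simpa [g, ← PowerSeries.coeff_zero_eq_constantCoeff_apply] using hf
  have key (n : ℕ) : ∀ z, (b.toeplitz PowerSeries.X ^ n) z = 0 →
      A (b.toeplitz PowerSeries.X z) = b.toeplitz PowerSeries.X (A z) := by
    induction n with
    | zero => simp_all
    | succ n ih =>
      intro z hz
      apply b.toeplitz_injective hg
      have h := congr($hA.eq z)
      rwa [Module.End.mul_apply, Module.End.mul_apply, toeplitz_apply_eq_toeplitz_shift,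
        toeplitz_apply_eq_toeplitz_shift b f (A z), map_add, map_smul, add_left_inj,
        b.apply_toeplitz_of_commute_on_ker ih g (b.toeplitz_X_pow_apply_toeplitz_X_eq_zero hz)] at h
  refine (commute_iff_eq _ _).mpr (b.ext fun k => ?_)
  exact key (k + 1) (b k) (b.toeplitz_X_pow_basis_of_lt k.lt_succ_self)

lemma toeplitz_X_pow_toeplitz_apply_eq_zero_iff {a : PowerSeries R}
    (ha : IsUnit (PowerSeries.constantCoeff a)) {n : ℕ} {v : V} :
    (b.toeplitz PowerSeries.X ^ n) (b.toeplitz a v) = 0 ↔ (b.toeplitz PowerSeries.X ^ n) v = 0 := by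
  rw [← Module.End.mul_apply, ((b.commute_toeplitz PowerSeries.X a).pow_left n).eq,
    Module.End.mul_apply, (b.toeplitz_injective ha).eq_iff' (map_zero _)]

end Module.Basis

namespace Polynomial

variable {F : Type*} [Field F] (w : ℕ → F) (hw : ∀ n, w n ≠ 0)

noncomputable def weightedSequence (q : ℕ → F[X]) (hq : ∀ n, (q n).degree = n) : Sequence F :=
  ⟨fun n => (w n)⁻¹ • q n, fun n => by rw [smul_eq_C_mul, degree_C_mul (inv_ne_zero (hw n)), hq]⟩

variable (q : ℕ → F[X]) (hq : ∀ n, (q n).degree = n)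

noncomputable def weightedBasis : Module.Basis ℕ F F[X] :=
  (weightedSequence w hw q hq).basis fun _ =>
    (leadingCoeff_ne_zero.mpr (Sequence.ne_zero _ _)).isUnit

@[simp]
lemma weightedBasis_apply (n : ℕ) : weightedBasis w hw q hq n = (w n)⁻¹ • q n :=
  Sequence.basis_eq_self _ _ n

lemma degree_weightedBasis (n : ℕ) : (weightedBasis w hw q hq n).degree = n := by
  rw [weightedBasis, Sequence.basis_eq_self]
  exact (weightedSequence w hw q hq).degree_eq n

lemma toeplitz_X_pow_weightedBasis_apply_eq_zero_iff {n : ℕ} {v : F[X]} :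
    ((weightedBasis w hw q hq).toeplitz PowerSeries.X ^ n) v = 0 ↔ v.degree < n := by
  rw [Module.Basis.toeplitz_X_pow_apply_eq_zero_iff, ← mem_degreeLT,
    ← (weightedSequence w hw q hq).span_degreeLT fun _ _ =>
      (leadingCoeff_ne_zero.mpr (Sequence.ne_zero _ _)).isUnit]
  have hcoe : ⇑(weightedBasis w hw q hq) = weightedSequence w hw q hq :=
    _root_.funext fun n => Sequence.basis_eq_self _ _ n
  rw [hcoe]

lemma degree_toeplitz_weightedBasis_apply {a : PowerSeries F}
    (ha : PowerSeries.constantCoeff a ≠ 0) {v : F[X]} {l : ℕ} (hv : v.degree = l) :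
    ((weightedBasis w hw q hq).toeplitz a v).degree = l := by
  have h (n : ℕ) : ((weightedBasis w hw q hq).toeplitz a v).degree < n ↔ v.degree < n := by
    rw [← toeplitz_X_pow_weightedBasis_apply_eq_zero_iff w hw q hq,
      ← toeplitz_X_pow_weightedBasis_apply_eq_zero_iff w hw q hq,
      Module.Basis.toeplitz_X_pow_toeplitz_apply_eq_zero_iff _ ha.isUnit]
  have hlt := (h (l + 1)).mpr (by rw [hv]; exact_mod_cast l.lt_succ_self)
  have hge := mt (h l).mp (by rw [hv]; exact lt_irrefl _)
  cases hd : ((weightedBasis w hw q hq).toeplitz a v).degree with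
  | bot => simp [hd] at hge
  | coe m =>
    rw [hd] at hlt hge
    simp only [← Nat.cast_withBot, Nat.cast_lt, Nat.cast_inj] at hlt hge ⊢
    omega

lemma repr_weightedBasis_zero_ne_zero {v : F[X]} (hv : v.degree = 0) :
    (weightedBasis w hw q hq).repr v 0 ≠ 0 := by
  intro h0
  refine degree_ne_bot.mp (hv ▸ WithBot.coe_ne_bot)
    ((weightedBasis w hw q hq).eq_zero_of_toeplitz_X_apply_eq_zero ?_ h0)
  rw [← pow_one ((weightedBasis w hw q hq).toeplitz PowerSeries.X),
    toeplitz_X_pow_weightedBasis_apply_eq_zero_iff, hv]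
  exact_mod_cast zero_lt_one

end Polynomial

section WCalculus

variable {F : Type*} [Field F] (w : ℕ → F) (hw : ∀ n, w n ≠ 0)

noncomputable abbrev weightedMonomialBasis : Module.Basis ℕ F F[X] :=
  weightedBasis w hw (X ^ ·) fun n => degree_X_pow n

lemma mulProp_iff_dualSeries_mul (φ ψ χ : F[X] →ₗ[F] F) :
    mulProp w φ ψ χ ↔ (weightedMonomialBasis w hw).dualSeries χ =
      (weightedMonomialBasis w hw).dualSeries φ * (weightedMonomialBasis w hw).dualSeries ψ := by
  simp [mulProp, PowerSeries.ext_iff, PowerSeries.coeff_mul,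
    Nat.sum_antidiagonal_eq_sum_range_succ_mk]

lemma mulProp_iff_eq_comp_toeplitz (φ ψ χ : F[X] →ₗ[F] F) :
    mulProp w φ ψ χ ↔
      χ = φ ∘ₗ (weightedMonomialBasis w hw).toeplitz
        ((weightedMonomialBasis w hw).dualSeries ψ) := by
  rw [mulProp_iff_dualSeries_mul, ← (weightedMonomialBasis w hw).dualSeries_injective.eq_iff,
    Module.Basis.dualSeries_comp_toeplitz, mul_comm]

lemma eq_toeplitz_of_translation (T : F → F[X] →ₗ[F] F[X])
    (hT : ∀ (h : F) (n : ℕ), T h (X ^ n) =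
      ∑ k ∈ Finset.range (n + 1), (w n * h ^ (n - k) / (w (n - k) * w k)) • (X : F[X]) ^ k)
    (h : F) :
    T h = (weightedMonomialBasis w hw).toeplitz
      ((weightedMonomialBasis w hw).dualSeries (leval h)) := by
  refine (weightedMonomialBasis w hw).ext fun n => ?_
  rw [Module.Basis.toeplitz_basis, ← Nat.sum_antidiagonal_swap,
    Nat.sum_antidiagonal_eq_sum_range_succ_mk]
  simp only [weightedBasis_apply, map_smul, hT, Finset.smul_sum, smul_smul, Prod.swap, leval_apply,
    Module.Basis.coeff_dualSeries, eval_pow, eval_X, smul_eq_mul]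
  refine Finset.sum_congr rfl fun k _ => ?_
  field_simp [hw n, hw k, hw (n - k)]

lemma eq_toeplitz_X_of_lowering (p : ℕ → F[X]) (hp : ∀ n, (p n).degree = n)
    (Q : F[X] →ₗ[F] F[X]) (hQ0 : Q (p 0) = 0)
    (hQ : ∀ n : ℕ, Q (p (n + 1)) = (w (n + 1) / w n) • p n) :
    Q = (weightedBasis w hw p hp).toeplitz PowerSeries.X := by
  refine (weightedBasis w hw p hp).ext fun n => ?_
  cases n with
  | zero =>
    rw [Module.Basis.toeplitz_X_basis_zero, weightedBasis_apply, map_smul, hQ0, smul_zero]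
  | succ n =>
    rw [Module.Basis.toeplitz_X_basis_succ, weightedBasis_apply, weightedBasis_apply, map_smul, hQ,
      smul_smul, div_eq_mul_inv, ← mul_assoc, inv_mul_cancel₀ (hw _), one_mul]

variable (p : ℕ → F[X]) (hp : ∀ n, (p n).degree = n)

lemma sheffer_convolution_iff_toeplitz (d : ℕ → F[X]) :
    (∀ φ ψ χ : F[X] →ₗ[F] F, mulProp w φ ψ χ →
      ∀ n : ℕ, χ ((w n)⁻¹ • p n) =
        ∑ k ∈ Finset.range (n + 1), φ ((w k)⁻¹ • p k) * ψ ((w (n - k))⁻¹ • d (n - k))) ↔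
    ∀ ψ : F[X] →ₗ[F] F,
      (weightedMonomialBasis w hw).toeplitz ((weightedMonomialBasis w hw).dualSeries ψ) =
        (weightedBasis w hw p hp).toeplitz (PowerSeries.mk fun l => ψ ((w l)⁻¹ • d l)) := by
  simp only [mulProp_iff_eq_comp_toeplitz w hw, Module.Basis.eq_toeplitz_iff, weightedBasis_apply,
    PowerSeries.coeff_mk]
  exact ⟨fun h ψ φ n => h φ ψ _ rfl n, fun h φ ψ χ hχ n => hχ ▸ h ψ φ n⟩

end WCalculus

theorem stmt14_general {F : Type*} [Field F] (w : ℕ → F)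
    (hw : ∀ n, w n ≠ 0)
    (p : ℕ → F[X]) (hp : ∀ n, (p n).degree = n)
    (Q : F[X] →ₗ[F] F[X]) (hQ0 : Q (p 0) = 0)
    (hQ : ∀ n : ℕ, Q (p (n + 1)) = (w (n + 1) / w n) • p n)
    (T : F → F[X] →ₗ[F] F[X])
    (hT : ∀ (h : F) (n : ℕ), T h (X ^ n) =
      ∑ k ∈ Finset.range (n + 1),
        (w n * h ^ (n - k) / (w (n - k) * w k)) • (X : F[X]) ^ k) :
    (∀ h : F, Q ∘ₗ T h = T h ∘ₗ Q) ↔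
      ∃ d : ℕ → F[X], (∀ l, (d l).degree = l) ∧
        ∀ φ ψ χ : F[X] →ₗ[F] F, mulProp w φ ψ χ →
          ∀ n : ℕ, χ ((w n)⁻¹ • p n) =
            ∑ k ∈ Finset.range (n + 1),
              φ ((w k)⁻¹ • p k) * ψ ((w (n - k))⁻¹ • d (n - k)) := by
  set e := weightedMonomialBasis w hw
  set P := weightedBasis w hw p hp
  have hQP : Q = P.toeplitz PowerSeries.X := eq_toeplitz_X_of_lowering w hw p hp Q hQ0 hQ
  have hTe := eq_toeplitz_of_translation w hw T hT
  simp_rw [sheffer_convolution_iff_toeplitz w hw p hp]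
  constructor
  · intro hcomm
    have hQD : Commute Q (e.toeplitz PowerSeries.X) :=
      e.commute_toeplitz_X_of_commute (f := e.dualSeries (leval 1)) (by simpa [e] using hw 1)
        (by rw [← hTe]; exact hcomm 1)
    refine ⟨fun l => e.toeplitz (e.dualSeries (P.coord 0)) (p l),
      fun l => degree_toeplitz_weightedBasis_apply w hw _ _ ?_ (hp l), fun ψ => ?_⟩
    · simpa [← PowerSeries.coeff_zero_eq_constantCoeff_apply] using
        repr_weightedBasis_zero_ne_zero w hw p hp (degree_weightedBasis w hw _ _ 0)
    · rw [e.toeplitz_dualSeries_eq_toeplitz_of_commute P (by rwa [← hQP])]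
      simp [P]
  · rintro ⟨d, -, hd⟩ h
    rw [hTe h, hd, hQP]
    exact (P.commute_toeplitz _ _).eq

/-- A graded sequence `{pₙ}` is `W`-Sheffer iff there is a graded sequence
`{dₗ}` such that `(φ ·_W ψ)(pₙ/wₙ) = ∑_{k ≤ n} φ(pₖ/wₖ) ψ(d_{n-k}/w_{n-k})`
for all linear functionals `φ, ψ`. -/
theorem stmt14 {F : Type*} [Field F] (w : ℕ → F) (hw0 : w 0 = 1)
    (hw : ∀ n, w n ≠ 0)
    (p : ℕ → F[X]) (hp : ∀ n, (p n).degree = n)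
    (Q : F[X] →ₗ[F] F[X]) (hQ0 : Q (p 0) = 0)
    (hQ : ∀ n : ℕ, Q (p (n + 1)) = (w (n + 1) / w n) • p n)
    (T : F → F[X] →ₗ[F] F[X])
    (hT : ∀ (h : F) (n : ℕ), T h (X ^ n) =
      ∑ k ∈ Finset.range (n + 1),
        (w n * h ^ (n - k) / (w (n - k) * w k)) • (X : F[X]) ^ k) :
    (∀ h : F, Q ∘ₗ T h = T h ∘ₗ Q) ↔
      ∃ d : ℕ → F[X], (∀ l, (d l).degree = l) ∧
        ∀ φ ψ χ : F[X] →ₗ[F] F, mulProp w φ ψ χ →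
          ∀ n : ℕ, χ ((w n)⁻¹ • p n) =
            ∑ k ∈ Finset.range (n + 1),
              φ ((w k)⁻¹ • p k) * ψ ((w (n - k))⁻¹ • d (n - k)) :=
  stmt14_general w hw p hp Q hQ0 hQ T hT
end

section
/- A graded sequence $\{p_n\}$ is $W$-Sheffer if and only if its $W$-dual basis $\{\varphi_r\}$ (defined by $\varphi_r(p_n/w_n)=\delta_{n,r}$) has the form $\varphi_r = \xi \cdot_W \eta^{r}$ for some functionals $\xi,\eta \in \mathbb{F}[x]^*$ with $v(\xi)=0$ and $v(\eta)=1$, where powers are taken with respect to the product $\cdot_W$. -/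
/-!
Under `φ ↦ ∑ φ(xⁿ/wₙ) yⁿ` the dual of `𝔽[x]` becomes `𝔽[[y]]`, precomposition with the
`W`-translation `T_h` becomes multiplication by `e_W(hy) = ∑ hⁿ yⁿ / wₙ`, and the transpose of `Q`
becomes an operator `M` that raises the order, with `M φ_r = φ_{r+1}`. A linear operator on
`𝔽[[y]]` that does not lower the order is determined by its values on any family of series of
orders `0, 1, 2, …`. If `Q` commutes with every `T_h`, then `M` commutes with multiplication by
`e_W(y) - 1`, a series of order one; checking on its powers, `M` is multiplication by `g = M 1`,
so `φ_r = φ_0 g^r`. Conversely, if `φ_r = ξ η^r` then `M` agrees with multiplication by `η` on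
the `φ_r`, hence everywhere, so it commutes with multiplication by every `e_W(hy)`, and transposing
back gives `Q T_h = T_h Q`.
-/

open Polynomial

/-- The identification of a linear functional `φ` on `𝔽[x]` with the power
series `∑ₙ φ(xⁿ/wₙ) yⁿ`; it is a ring isomorphism from `(𝔽[x]*, ·_W)` to
`𝔽[[y]]`, so products and powers with respect to `·_W` correspond to products
and powers of power series. -/
noncomputable def toPS {F : Type*} [Field F] (w : ℕ → F)
    (φ : F[X] →ₗ[F] F) : PowerSeries F :=
  PowerSeries.mk fun n => φ ((w n)⁻¹ • X ^ n)

namespace PowerSeries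

variable {F : Type*} [Field F]

theorem X_pow_succ_dvd_sub_smul {N : ℕ} {G B : PowerSeries F} (hG : X ^ N ∣ G) (hB : X ^ N ∣ B)
    (hBN : coeff N B ≠ 0) : X ^ (N + 1) ∣ G - (coeff N G / coeff N B) • B := by
  rw [X_pow_dvd_iff] at hG hB ⊢
  intro m hm
  rcases Nat.lt_succ_iff_lt_or_eq.mp hm with hm | rfl
  · simp [hG m hm, hB m hm]
  · simp [div_mul_cancel₀ _ hBN]

theorem linearMap_eq_zero_of_apply_eq_zero {D : PowerSeries F →ₗ[F] PowerSeries F}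
    (hD : ∀ N G, X ^ N ∣ G → X ^ N ∣ D G) {B : ℕ → PowerSeries F} (hB : ∀ r, X ^ r ∣ B r)
    (hBr : ∀ r, coeff r (B r) ≠ 0) (hDB : ∀ r, D (B r) = 0) : D = 0 := by
  ext G n
  -- Downward induction on the order of `G`: subtracting a multiple of `B N` raises it.
  suffices ∀ N ≤ n + 1, ∀ G, X ^ N ∣ G → coeff n (D G) = 0 by simpa using this 0 (by omega) G
  intro N hN
  induction hN using Nat.decreasingInduction with
  | self => exact fun G hG => X_pow_dvd_iff.mp (hD _ G hG) n n.lt_succ_self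
  | of_succ N _ ih =>
    intro G hG
    have := ih _ (X_pow_succ_dvd_sub_smul hG (hB N) (hBr N))
    rwa [map_sub, map_smul, hDB, smul_zero, sub_zero] at this

theorem eq_mulLeft_of_apply_eq_mul {M : PowerSeries F →ₗ[F] PowerSeries F}
    (hM : ∀ N G, X ^ N ∣ G → X ^ N ∣ M G) {B : ℕ → PowerSeries F} (hB : ∀ r, X ^ r ∣ B r)
    (hBr : ∀ r, coeff r (B r) ≠ 0) {g : PowerSeries F} (hMB : ∀ r, M (B r) = g * B r) :
    M = LinearMap.mulLeft F g := by
  refine sub_eq_zero.mp (linearMap_eq_zero_of_apply_eq_zero (fun N G hG => ?_) hB hBr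
    fun r => by simp [hMB])
  exact dvd_sub (hM N G hG) (dvd_mul_of_dvd_right hG g)

theorem eq_mulLeft_of_eq_mul_pow {M : PowerSeries F →ₗ[F] PowerSeries F}
    (hM : ∀ N G, X ^ N ∣ G → X ^ N ∣ M G) {A : ℕ → PowerSeries F} (hA : ∀ r, X ^ r ∣ A r)
    (hAr : ∀ r, coeff r (A r) ≠ 0) (hMA : ∀ r, M (A r) = A (r + 1)) {a g : PowerSeries F}
    (hfact : ∀ r, A r = a * g ^ r) : M = LinearMap.mulLeft F g :=
  eq_mulLeft_of_apply_eq_mul hM hA hAr fun r => by rw [hMA, hfact, hfact, pow_succ]; ring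

theorem coeff_X_mul_pow (u : PowerSeries F) (r : ℕ) :
    coeff r ((X * u) ^ r) = constantCoeff u ^ r := by
  rw [mul_pow, coeff_X_pow_mul', if_pos le_rfl, Nat.sub_self, coeff_zero_eq_constantCoeff_apply,
    map_pow]

theorem eq_mulLeft_of_comp_mulLeft_comm {M : PowerSeries F →ₗ[F] PowerSeries F}
    (hM : ∀ N G, X ^ N ∣ G → X ^ N ∣ M G) {u : PowerSeries F} (hu : constantCoeff u ≠ 0)
    (hcomm : M ∘ₗ LinearMap.mulLeft F (1 + X * u) = LinearMap.mulLeft F (1 + X * u) ∘ₗ M) :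
    M = LinearMap.mulLeft F (M 1) := by
  have hXu : ∀ G, M (X * u * G) = X * u * M G := fun G => by
    simpa [add_mul] using LinearMap.congr_fun hcomm G
  refine eq_mulLeft_of_apply_eq_mul hM (B := fun r => (X * u) ^ r)
    (fun r => pow_dvd_pow_of_dvd (dvd_mul_right X u) r)
    (fun r => by simpa [coeff_X_mul_pow] using pow_ne_zero r hu) fun r => ?_
  induction r with
  | zero => simp
  | succ r ih => rw [pow_succ', hXu, ih, mul_left_comm]

theorem exists_eq_mul_pow_of_comp_mulLeft_comm {M : PowerSeries F →ₗ[F] PowerSeries F}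
    (hM : ∀ N G, X ^ N ∣ G → X ^ (N + 1) ∣ M G) {u : PowerSeries F} (hu : constantCoeff u ≠ 0)
    (hcomm : M ∘ₗ LinearMap.mulLeft F (1 + X * u) = LinearMap.mulLeft F (1 + X * u) ∘ₗ M)
    {A : ℕ → PowerSeries F} (hA1 : coeff 1 (A 1) ≠ 0) (hMA : ∀ r, M (A r) = A (r + 1)) :
    ∃ v, constantCoeff v ≠ 0 ∧ ∀ r, A r = A 0 * (X * v) ^ r := by
  have hMmul := eq_mulLeft_of_comp_mulLeft_comm
    (fun N G hG => (pow_dvd_pow X N.le_succ).trans (hM N G hG)) hu hcomm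
  obtain ⟨v, hv⟩ : X ∣ M 1 := by simpa using hM 0 1 (by simp)
  have hA : ∀ r, A r = A 0 * (X * v) ^ r := fun r => by
    induction r with
    | zero => simp
    | succ r ih => rw [← hMA, hMmul, LinearMap.mulLeft_apply, ih, hv, pow_succ]; ring
  refine ⟨v, fun hv0 => hA1 ?_, hA⟩
  rw [hA 1, pow_one, mul_left_comm, coeff_succ_X_mul, coeff_zero_eq_constantCoeff_apply,
    map_mul, hv0, mul_zero]

end PowerSeries

theorem LinearMap.dualMap_inj {K V W : Type*} [Field K] [AddCommGroup V] [Module K V]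
    [AddCommGroup W] [Module K W] {f g : V →ₗ[K] W} : f.dualMap = g.dualMap ↔ f = g := by
  refine ⟨fun h => LinearMap.ext fun v => sub_eq_zero.mp ?_, congrArg _⟩
  refine (Module.forall_dual_apply_eq_zero_iff K (f v - g v)).mp fun φ => ?_
  rw [map_sub, sub_eq_zero]
  exact LinearMap.congr_fun (LinearMap.congr_fun h φ) v

theorem LinearEquiv.comp_comm_iff_conj_dualMap {K V W : Type*} [Field K] [AddCommGroup V]
    [Module K V] [AddCommGroup W] [Module K W] (e : Module.Dual K V ≃ₗ[K] W)
    (Q T : V →ₗ[K] V) :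
    Q ∘ₗ T = T ∘ₗ Q ↔
      e.conj Q.dualMap ∘ₗ e.conj T.dualMap = e.conj T.dualMap ∘ₗ e.conj Q.dualMap := by
  rw [← e.conj_comp, ← e.conj_comp, e.conj.injective.eq_iff, LinearMap.dualMap_comp_dualMap,
    LinearMap.dualMap_comp_dualMap, LinearMap.dualMap_inj, eq_comm]

namespace Polynomial.Sequence

variable {F : Type*} [Field F] (S : Sequence F)

theorem isUnit_leadingCoeff (i : ℕ) : IsUnit (S i).leadingCoeff :=
  isUnit_iff_ne_zero.mpr (leadingCoeff_ne_zero.mpr (S.ne_zero i))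

theorem degreeLT_le_ker {ψ : Module.Dual F F[X]} {r : ℕ} (hψ : ∀ k < r, ψ (S k) = 0) :
    degreeLT F r ≤ LinearMap.ker ψ := by
  rw [← S.span_degreeLT fun i _ => S.isUnit_leadingCoeff i, Submodule.span_le]
  rintro _ ⟨k, hk, rfl⟩
  exact hψ k hk

theorem apply_mem_degreeLT {Q : F[X] →ₗ[F] F[X]} (c : ℕ → F) (hQ0 : Q (S 0) = 0)
    (hQ : ∀ n, Q (S (n + 1)) = c n • S n) (n : ℕ) : Q (S n) ∈ degreeLT F n := by
  rw [mem_degreeLT]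
  cases n with
  | zero => simp [hQ0]
  | succ n =>
    rw [hQ]
    exact (degree_smul_le _ _).trans_lt (by rw [S.degree_eq]; exact_mod_cast n.lt_succ_self)

theorem degreeLT_succ_le_comap {Q : F[X] →ₗ[F] F[X]} (hQ : ∀ n, Q (S n) ∈ degreeLT F n) (n : ℕ) :
    degreeLT F (n + 1) ≤ (degreeLT F n).comap Q := by
  rw [← S.span_degreeLT fun i _ => S.isUnit_leadingCoeff i, Submodule.span_le]
  rintro _ ⟨k, hk, rfl⟩
  exact degreeLT_mono (Nat.lt_succ_iff.mp hk) (hQ k)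

end Polynomial.Sequence

theorem Polynomial.apply_X_pow_ne_zero {F : Type*} [Field F] {ψ : Module.Dual F F[X]} {q : F[X]}
    {r : ℕ} (hq : q.degree = r) (hψ : degreeLT F r ≤ LinearMap.ker ψ) (hψq : ψ q ≠ 0) :
    ψ (X ^ r) ≠ 0 := by
  have hq0 : q ≠ 0 := by rintro rfl; simp at hq
  have hlow : ψ q.eraseLead = 0 := hψ (mem_degreeLT.mpr (hq ▸ degree_eraseLead_lt hq0))
  rw [← eraseLead_add_monomial_natDegree_leadingCoeff q, map_add, hlow, zero_add,
    natDegree_eq_of_degree_eq_some hq, ← C_mul_X_pow_eq_monomial, ← smul_eq_C_mul, map_smul,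
    smul_eq_mul] at hψq
  exact right_ne_zero_of_mul hψq

section toPS

variable {F : Type*} [Field F] {w : ℕ → F}

theorem coeff_toPS (φ : Module.Dual F F[X]) (n : ℕ) :
    PowerSeries.coeff n (toPS w φ) = (w n)⁻¹ * φ (X ^ n) := by
  simp [toPS]

theorem Polynomial.basisMonomials_eq_X_pow (n : ℕ) : basisMonomials F n = X ^ n := by
  rw [coe_basisMonomials, X_pow_eq_monomial]

noncomputable def toPSEquiv (hw : ∀ n, w n ≠ 0) : Module.Dual F F[X] ≃ₗ[F] PowerSeries F where
  toFun := toPS w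
  invFun G := (basisMonomials F).constr F fun n => w n * PowerSeries.coeff n G
  map_add' φ ψ := by ext n; simp [coeff_toPS, mul_add]
  map_smul' c φ := by ext n; simp [coeff_toPS, mul_left_comm]
  left_inv φ := (basisMonomials F).ext fun n => by
    rw [Module.Basis.constr_basis, basisMonomials_eq_X_pow, coeff_toPS,
      mul_inv_cancel_left₀ (hw n)]
  right_inv G := by
    ext n
    rw [coeff_toPS, ← basisMonomials_eq_X_pow, Module.Basis.constr_basis,
      inv_mul_cancel_left₀ (hw n)]

theorem toPSEquiv_apply (hw : ∀ n, w n ≠ 0) (φ : Module.Dual F F[X]) :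
    toPSEquiv hw φ = toPS w φ :=
  rfl

theorem toPS_toPSEquiv_symm (hw : ∀ n, w n ≠ 0) (G : PowerSeries F) :
    toPS w ((toPSEquiv hw).symm G) = G :=
  (toPSEquiv hw).apply_symm_apply G

theorem apply_X_pow_eq_zero_iff (hw : ∀ n, w n ≠ 0) (φ : Module.Dual F F[X]) (n : ℕ) :
    φ (X ^ n) = 0 ↔ PowerSeries.coeff n (toPS w φ) = 0 := by
  simp [coeff_toPS, hw]

theorem X_pow_dvd_toPS_iff (hw : ∀ n, w n ≠ 0) (φ : Module.Dual F F[X]) (N : ℕ) :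
    PowerSeries.X ^ N ∣ toPS w φ ↔ degreeLT F N ≤ LinearMap.ker φ := by
  classical
  simp [PowerSeries.X_pow_dvd_iff, ← apply_X_pow_eq_zero_iff hw, degreeLT_eq_span_X_pow,
    Submodule.span_le, Set.subset_def]

theorem conj_dualMap_toPS (hw : ∀ n, w n ≠ 0) (Q : F[X] →ₗ[F] F[X]) (φ : Module.Dual F F[X]) :
    (toPSEquiv hw).conj Q.dualMap (toPS w φ) = toPS w (φ ∘ₗ Q) :=
  congrArg (toPS w ∘ Q.dualMap) ((toPSEquiv hw).symm_apply_apply φ)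

theorem X_pow_succ_dvd_conj_dualMap (hw : ∀ n, w n ≠ 0) {Q : F[X] →ₗ[F] F[X]}
    (hQ : ∀ n, degreeLT F (n + 1) ≤ (degreeLT F n).comap Q) {N : ℕ} {G : PowerSeries F}
    (hG : PowerSeries.X ^ N ∣ G) :
    PowerSeries.X ^ (N + 1) ∣ (toPSEquiv hw).conj Q.dualMap G := by
  obtain ⟨φ, rfl⟩ := (toPSEquiv hw).surjective G
  rw [toPSEquiv_apply, conj_dualMap_toPS, X_pow_dvd_toPS_iff hw, LinearMap.ker_comp]
  exact (hQ N).trans (Submodule.comap_mono ((X_pow_dvd_toPS_iff hw φ N).mp hG))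

end toPS

section Translation

variable {F : Type*} [Field F] {w : ℕ → F}

noncomputable def wExp (w : ℕ → F) (h : F) : PowerSeries F :=
  PowerSeries.mk fun n => h ^ n / w n

theorem wExp_one (hw0 : w 0 = 1) :
    wExp w 1 = 1 + PowerSeries.X * PowerSeries.mk fun n => (w (n + 1))⁻¹ := by
  ext (_ | n) <;> simp [wExp, hw0, PowerSeries.coeff_one]

theorem toPS_comp_eq_wExp_mul (hw : ∀ n, w n ≠ 0) {T : F[X] →ₗ[F] F[X]} {h : F}
    (hT : ∀ n : ℕ, T (X ^ n) =
      ∑ k ∈ Finset.range (n + 1), (w n * h ^ (n - k) / (w (n - k) * w k)) • (X : F[X]) ^ k)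
    (φ : Module.Dual F F[X]) : toPS w (φ ∘ₗ T) = wExp w h * toPS w φ := by
  ext n
  rw [mul_comm, PowerSeries.coeff_mul, Finset.Nat.sum_antidiagonal_eq_sum_range_succ_mk,
    coeff_toPS, LinearMap.comp_apply, hT, map_sum, Finset.mul_sum]
  refine Finset.sum_congr rfl fun k _ => ?_
  simp only [map_smul, smul_eq_mul, coeff_toPS, wExp, PowerSeries.coeff_mk]
  field_simp [hw]

theorem conj_dualMap_eq_mulLeft_wExp (hw : ∀ n, w n ≠ 0) {T : F[X] →ₗ[F] F[X]} {h : F}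
    (hT : ∀ n : ℕ, T (X ^ n) =
      ∑ k ∈ Finset.range (n + 1), (w n * h ^ (n - k) / (w (n - k) * w k)) • (X : F[X]) ^ k) :
    (toPSEquiv hw).conj T.dualMap = LinearMap.mulLeft F (wExp w h) := by
  refine LinearMap.ext fun G => ?_
  obtain ⟨φ, rfl⟩ := (toPSEquiv hw).surjective G
  exact (conj_dualMap_toPS hw T φ).trans (toPS_comp_eq_wExp_mul hw hT φ)

end Translation

section WDualBasis

variable {F : Type*} [Field F] {w : ℕ → F}

def IsWDualBasis (w : ℕ → F) (p : ℕ → F[X]) (φ : ℕ → Module.Dual F F[X]) : Prop :=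
  ∀ r n, φ r ((w n)⁻¹ • p n) = if n = r then 1 else 0

variable {S : Sequence F} {φ : ℕ → Module.Dual F F[X]}

namespace IsWDualBasis

theorem apply_eq (hφ : IsWDualBasis w S φ) (hw : ∀ n, w n ≠ 0) (r n : ℕ) :
    φ r (S n) = if n = r then w n else 0 := by
  have := hφ r n
  rw [map_smul, smul_eq_mul, inv_mul_eq_iff_eq_mul₀ (hw n)] at this
  simpa using this

theorem X_pow_dvd_toPS (hφ : IsWDualBasis w S φ) (hw : ∀ n, w n ≠ 0) (r : ℕ) :
    PowerSeries.X ^ r ∣ toPS w (φ r) :=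
  (X_pow_dvd_toPS_iff hw _ r).mpr
    (S.degreeLT_le_ker fun k hk => by simp [hφ.apply_eq hw, hk.ne])

theorem coeff_toPS_ne_zero (hφ : IsWDualBasis w S φ) (hw : ∀ n, w n ≠ 0) (r : ℕ) :
    PowerSeries.coeff r (toPS w (φ r)) ≠ 0 := by
  have hker := (X_pow_dvd_toPS_iff hw _ r).mp (hφ.X_pow_dvd_toPS hw r)
  refine (apply_X_pow_eq_zero_iff hw _ r).not.mp (apply_X_pow_ne_zero (S.degree_eq r) hker ?_)
  simpa [hφ.apply_eq hw] using hw r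

theorem comp_eq_succ (hφ : IsWDualBasis w S φ) (hw : ∀ n, w n ≠ 0) {Q : F[X] →ₗ[F] F[X]}
    (hQ0 : Q (S 0) = 0) (hQ : ∀ n : ℕ, Q (S (n + 1)) = (w (n + 1) / w n) • S n) (r : ℕ) :
    φ r ∘ₗ Q = φ (r + 1) := by
  refine (S.basis S.isUnit_leadingCoeff).ext fun n => ?_
  rw [Sequence.basis_eq_self, LinearMap.comp_apply]
  cases n with
  | zero => simp [hQ0, hφ.apply_eq hw]
  | succ n =>
    rw [hQ, map_smul, smul_eq_mul, hφ.apply_eq hw, hφ.apply_eq hw]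
    split_ifs <;> simp_all [div_mul_cancel₀ _ (hw _)]

end IsWDualBasis

end WDualBasis

/-- A graded sequence `{pₙ}` is `W`-Sheffer iff its `W`-dual basis `{φᵣ}` is
of the form `φᵣ = ξ ·_W η^r` with `v(ξ) = 0` and `v(η) = 1` (powers taken for
the product `·_W`, i.e. under the canonical identification with `𝔽[[y]]`). -/
theorem stmt15 {F : Type*} [Field F] (w : ℕ → F) (hw0 : w 0 = 1)
    (hw : ∀ n, w n ≠ 0)
    (p : ℕ → F[X]) (hp : ∀ n, (p n).degree = n)
    (Q : F[X] →ₗ[F] F[X]) (hQ0 : Q (p 0) = 0)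
    (hQ : ∀ n : ℕ, Q (p (n + 1)) = (w (n + 1) / w n) • p n)
    (T : F → F[X] →ₗ[F] F[X])
    (hT : ∀ (h : F) (n : ℕ), T h (X ^ n) =
      ∑ k ∈ Finset.range (n + 1),
        (w n * h ^ (n - k) / (w (n - k) * w k)) • (X : F[X]) ^ k)
    -- the `W`-dual basis of `{pₙ}`
    (φ : ℕ → F[X] →ₗ[F] F)
    (hφ : ∀ r n : ℕ, φ r ((w n)⁻¹ • p n) = if n = r then 1 else 0) :
    (∀ h : F, Q ∘ₗ T h = T h ∘ₗ Q) ↔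
      ∃ ξ η : F[X] →ₗ[F] F,
        ξ 1 ≠ 0 ∧ η 1 = 0 ∧ η X ≠ 0 ∧
        ∀ r : ℕ, toPS w (φ r) = toPS w ξ * (toPS w η) ^ r := by
  let S : Sequence F := ⟨p, hp⟩
  have hφS : IsWDualBasis w S φ := hφ
  simp_rw [(toPSEquiv hw).comp_comm_iff_conj_dualMap, conj_dualMap_eq_mulLeft_wExp hw (hT _)]
  set M := (toPSEquiv hw).conj Q.dualMap
  have hM : ∀ N G, PowerSeries.X ^ N ∣ G → PowerSeries.X ^ (N + 1) ∣ M G := fun N G =>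
    X_pow_succ_dvd_conj_dualMap hw (S.degreeLT_succ_le_comap (S.apply_mem_degreeLT _ hQ0 hQ))
  have hMA : ∀ r, M (toPS w (φ r)) = toPS w (φ (r + 1)) := fun r => by
    rw [conj_dualMap_toPS, hφS.comp_eq_succ hw hQ0 hQ]
  constructor
  · intro hcomm
    obtain ⟨v, hv, hfact⟩ := PowerSeries.exists_eq_mul_pow_of_comp_mulLeft_comm hM
      (by simpa using hw 1) (wExp_one hw0 ▸ hcomm 1) (hφS.coeff_toPS_ne_zero hw 1) hMA
    refine ⟨φ 0, (toPSEquiv hw).symm (PowerSeries.X * v), ?_, ?_, ?_, ?_⟩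
    · simpa using (apply_X_pow_eq_zero_iff hw (φ 0) 0).not.mpr (hφS.coeff_toPS_ne_zero hw 0)
    · simpa using (apply_X_pow_eq_zero_iff hw _ 0).mpr (by simp [toPS_toPSEquiv_symm])
    · simpa using (apply_X_pow_eq_zero_iff hw _ 1).not.mpr
        (by simpa [toPS_toPSEquiv_symm] using hv)
    · simpa [toPS_toPSEquiv_symm] using hfact
  · rintro ⟨ξ, η, -, -, -, hfact⟩ h
    rw [PowerSeries.eq_mulLeft_of_eq_mul_pow
      (fun N G hG => (pow_dvd_pow _ N.le_succ).trans (hM N G hG)) (hφS.X_pow_dvd_toPS hw)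
      (hφS.coeff_toPS_ne_zero hw) hMA hfact]
    exact LinearMap.ext fun G => by simp [mul_left_comm]
end

section
/- For a graded sequence with matrix $A\in L$, the operator $Q_A$ (defined by $Q_A(p_n/w_n)=p_{n-1}/w_{n-1}$) is represented in the monomial basis by the matrix $A^{-1}M_W A$. Consequently, the group of $W$-Appell sequences is the stabilizer of $M_W$ under the conjugation action of $L$, and the $W$-Riordan group $R_W$ is the normalizer of this stabilizer in $L$. -/
/-!
A lower-triangular matrix `A` acts on `F[X]` by sending `X ^ n` to the polynomial whose
coefficients form row `n` of `A`. This is an injective anti-homomorphism into `Module.End F F[X]`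
taking `M_W` to `D_W` and the matrix of the sequence to the map `X ^ n ↦ p n`, which intertwines
`D_W` with `Q`; this gives the first two parts.

For the third, the lower-triangular matrices commuting with `M_W` are exactly the matrices
`f_{n-k} w_n / w_k`, i.e. the matrices of `f(D_W)` for power series `f`, so they commute with each
other. In terms of the column series `w_k • colSeries w A k`, the Riordan relation says that
consecutive columns differ by a fixed factor `f`, i.e. `A M_W = f(M_W) A`, i.e. `A M_W A⁻¹`
commutes with `M_W`. Given that, conjugation by `A` and by `A⁻¹` preserves the commutant of
`M_W`; conversely, conjugating the stabilizer element `I + M_W` recovers the condition.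
-/

open Polynomial

/-- The matrix `M_W` of the weighted derivative `D_W` in the monomial basis. -/
noncomputable def Mw {F : Type*} [Field F] (w : ℕ → F) : ℕ → ℕ → F :=
  fun n k => if k + 1 = n then w n / w (n - 1) else 0

/-- `B` is a two-sided inverse of `A`. -/
def IsInv {F : Type*} [Field F] (A B : ℕ → ℕ → F) : Prop :=
  matMul A B = idMat ∧ matMul B A = idMat

/-- `C` lies in the stabilizer of `M_W` under the right action `M ↦ A⁻¹MA`
of `L`, i.e. `C ∈ L` and `C⁻¹ M_W C = M_W`. -/
def Stab {F : Type*} [Field F] (w : ℕ → F) (C : ℕ → ℕ → F) : Prop :=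
  memL C ∧ ∃ D : ℕ → ℕ → F, IsInv C D ∧ matMul (matMul D (Mw w)) C = Mw w

theorem Units.commute_conj_iff {M : Type*} [Monoid M] (u : Mˣ) (x y : M) :
    Commute (u * x * ↑u⁻¹) y ↔ Commute x (↑u⁻¹ * y * u) := by
  rw [Commute, SemiconjBy, Commute, SemiconjBy, ← u.mul_left_inj, ← (u⁻¹).mul_right_inj]
  simp only [mul_assoc, Units.inv_mul_cancel_left, Units.inv_mul, mul_one]

section LowerTriangular

variable {F : Type*} [Field F]

def LowerTriangular (A : ℕ → ℕ → F) : Prop := ∀ ⦃n k : ℕ⦄, n < k → A n k = 0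

theorem lowerTriangular_idMat : LowerTriangular (idMat : ℕ → ℕ → F) :=
  fun _ _ h => if_neg h.ne

theorem lowerTriangular_Mw (w : ℕ → F) : LowerTriangular (Mw w) :=
  fun _ _ h => if_neg (by omega)

theorem LowerTriangular.matMul (A : ℕ → ℕ → F) {B : ℕ → ℕ → F}
    (hB : LowerTriangular B) : LowerTriangular (matMul A B) := fun n _ h =>
  Finset.sum_eq_zero fun k hk => by
    rw [hB (by have := Finset.mem_range.1 hk; omega), mul_zero]

theorem matMul_apply_self (A : ℕ → ℕ → F) {B : ℕ → ℕ → F} (hB : LowerTriangular B)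
    (n : ℕ) : matMul A B n n = A n n * B n n := by
  rw [matMul, Finset.sum_range_succ, Finset.sum_eq_zero fun k hk => by
    rw [hB (Finset.mem_range.1 hk), mul_zero], zero_add]

theorem memL.lowerTriangular {A : ℕ → ℕ → F} (hA : memL A) : LowerTriangular A :=
  fun n k h => hA.1 n k h

theorem memL.matMul {A B : ℕ → ℕ → F} (hA : memL A) (hB : memL B) : memL (matMul A B) :=
  ⟨fun _ _ h => hB.lowerTriangular.matMul A h, fun n => by
    rw [matMul_apply_self A hB.lowerTriangular]; exact mul_ne_zero (hA.2 n) (hB.2 n)⟩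

/-- Row `n` of `A` lists the coefficients of the image of `X ^ n`, so `toEnd` reverses
products (`toEnd_matMul`). -/
noncomputable def toEnd (A : ℕ → ℕ → F) : Module.End F F[X] :=
  (basisMonomials F).constr F fun n => ∑ k ∈ Finset.range (n + 1), monomial k (A n k)

theorem toEnd_X_pow (A : ℕ → ℕ → F) (n : ℕ) :
    toEnd A (X ^ n) = ∑ k ∈ Finset.range (n + 1), monomial k (A n k) := by
  have : (X : F[X]) ^ n = basisMonomials F n := by
    rw [coe_basisMonomials, ← monomial_one_right_eq_X_pow]
  rw [this, toEnd, Module.Basis.constr_basis]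

theorem coeff_toEnd_X_pow {A : ℕ → ℕ → F} (hA : LowerTriangular A) (n k : ℕ) :
    (toEnd A (X ^ n)).coeff k = A n k := by
  simp only [toEnd_X_pow, finsetSum_coeff, coeff_monomial, Finset.sum_ite_eq', Finset.mem_range]
  exact (ite_eq_left_iff.2 fun hk => (hA (by omega)).symm)

theorem End_ext_X_pow {f g : Module.End F F[X]} (h : ∀ n, f (X ^ n) = g (X ^ n)) : f = g :=
  (basisMonomials F).ext fun n => by
    simpa only [coe_basisMonomials, monomial_one_right_eq_X_pow] using h n

theorem toEnd_inj {A B : ℕ → ℕ → F} (hA : LowerTriangular A) (hB : LowerTriangular B) :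
    toEnd A = toEnd B ↔ A = B := by
  refine ⟨fun h => funext fun n => funext fun k => ?_, congrArg toEnd⟩
  rw [← coeff_toEnd_X_pow hA, ← coeff_toEnd_X_pow hB, h]

theorem toEnd_matMul (A : ℕ → ℕ → F) {B : ℕ → ℕ → F} (hB : LowerTriangular B) :
    toEnd (matMul A B) = toEnd B * toEnd A := by
  refine End_ext_X_pow fun n => Polynomial.ext fun l => ?_
  rw [coeff_toEnd_X_pow (hB.matMul A), Module.End.mul_apply, toEnd_X_pow A]
  simp only [← smul_X_eq_monomial, map_sum, map_smul, finsetSum_coeff, coeff_smul,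
    coeff_toEnd_X_pow hB, smul_eq_mul, matMul]

theorem toEnd_idMat : toEnd (idMat : ℕ → ℕ → F) = 1 :=
  End_ext_X_pow fun n => by
    simp [toEnd_X_pow, idMat, apply_ite, monomial_one_right_eq_X_pow]

theorem toEnd_add (A B : ℕ → ℕ → F) : toEnd (A + B) = toEnd A + toEnd B :=
  End_ext_X_pow fun n => by
    simp only [toEnd_X_pow, LinearMap.add_apply, Pi.add_apply, map_add, Finset.sum_add_distrib]

theorem matMul_eq_idMat_iff (A : ℕ → ℕ → F) {B : ℕ → ℕ → F}
    (hB : LowerTriangular B) : matMul A B = idMat ↔ toEnd B * toEnd A = 1 := by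
  rw [← toEnd_matMul A hB, ← toEnd_idMat, toEnd_inj (hB.matMul A) lowerTriangular_idMat]

theorem IsInv.lowerTriangular {A B : ℕ → ℕ → F} (hA : memL A) (h : IsInv A B) :
    LowerTriangular B := by
  intro n
  induction n using Nat.strong_induction_on with
  | _ n ih =>
    intro k hnk
    have he := congrFun (congrFun h.1 n) k
    rw [idMat, if_neg hnk.ne, matMul, Finset.sum_range_succ, Finset.sum_eq_zero fun j hj => by
      rw [ih j (Finset.mem_range.1 hj) (by have := Finset.mem_range.1 hj; omega), mul_zero],
      zero_add] at he
    exact (mul_eq_zero.1 he).resolve_left (hA.2 n)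

theorem IsInv.memL_right {A B : ℕ → ℕ → F} (hA : memL A) (h : IsInv A B) : memL B := by
  refine ⟨fun n k hnk => h.lowerTriangular hA hnk, fun n => ?_⟩
  have he := congrFun (congrFun h.2 n) n
  rw [matMul_apply_self B hA.lowerTriangular, idMat, if_pos rfl] at he
  exact left_ne_zero_of_mul_eq_one he

theorem IsInv.symm {A B : ℕ → ℕ → F} (h : IsInv A B) : IsInv B A := ⟨h.2, h.1⟩

noncomputable def IsInv.unit {A B : ℕ → ℕ → F} (hA : memL A) (h : IsInv A B) :
    (Module.End F F[X])ˣ where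
  val := toEnd A
  inv := toEnd B
  val_inv := (matMul_eq_idMat_iff B hA.lowerTriangular).1 h.2
  inv_val := (matMul_eq_idMat_iff A (h.lowerTriangular hA)).1 h.1

theorem isInv_iff_toEnd {A B : ℕ → ℕ → F} (hA : LowerTriangular A)
    (hB : LowerTriangular B) : IsInv A B ↔ toEnd B * toEnd A = 1 ∧ toEnd A * toEnd B = 1 :=
  and_congr (matMul_eq_idMat_iff A hB) (matMul_eq_idMat_iff B hA)

theorem matMul_matMul_Mw_eq_iff (w : ℕ → F) {C D : ℕ → ℕ → F} (hC : memL C)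
    (hCD : IsInv C D) :
    matMul (matMul D (Mw w)) C = Mw w ↔ Commute (toEnd C) (toEnd (Mw w)) := by
  rw [← toEnd_inj (hC.lowerTriangular.matMul _) (lowerTriangular_Mw w),
    toEnd_matMul _ hC.lowerTriangular, toEnd_matMul _ (lowerTriangular_Mw w), ← mul_assoc]
  exact (hCD.unit hC).commute_iff_mul_inv_cancel.symm

theorem stab_iff (w : ℕ → F) (C : ℕ → ℕ → F) :
    Stab w C ↔ memL C ∧ (∃ D, IsInv C D) ∧ Commute (toEnd C) (toEnd (Mw w)) := by
  refine and_congr_right fun hC => ?_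
  rw [← exists_and_right]
  exact exists_congr fun D => and_congr_right (matMul_matMul_Mw_eq_iff w hC)

theorem stab_conj_iff (w : ℕ → F) {A B C : ℕ → ℕ → F} (hA : memL A) (hAB : IsInv A B)
    (hC : Stab w C) :
    Stab w (matMul (matMul B C) A) ↔ Commute (toEnd C) (toEnd (matMul (matMul A (Mw w)) B)) := by
  obtain ⟨hCL, ⟨D, hCD⟩, -⟩ := (stab_iff w C).1 hC
  have hB := hAB.memL_right hA
  have hD := hCD.memL_right hCL
  set u := hAB.unit hA
  have hconj (X : ℕ → ℕ → F) (hX : LowerTriangular X) :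
      toEnd (matMul (matMul B X) A) = u * toEnd X * ↑u⁻¹ := by
    rw [toEnd_matMul _ hA.lowerTriangular, toEnd_matMul _ hX, ← mul_assoc]; rfl
  have hinv : IsInv (matMul (matMul B C) A) (matMul (matMul B D) A) := by
    have hmul (x y : Module.End F F[X]) :
        (u * x * ↑u⁻¹) * (u * y * ↑u⁻¹) = u * (x * y) * ↑u⁻¹ := by
      simp only [mul_assoc, Units.inv_mul_cancel_left]
    obtain ⟨hDC, hCD'⟩ := (isInv_iff_toEnd hCL.lowerTriangular hD.lowerTriangular).1 hCD
    rw [isInv_iff_toEnd (hA.lowerTriangular.matMul _) (hA.lowerTriangular.matMul _),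
      hconj C hCL.lowerTriangular, hconj D hD.lowerTriangular, hmul, hmul, hDC, hCD', mul_one,
      Units.mul_inv, and_self]
  rw [stab_iff, and_iff_right ((hB.matMul hCL).matMul hA), and_iff_right ⟨_, hinv⟩,
    hconj C hCL.lowerTriangular, Units.commute_conj_iff, toEnd_matMul _ hB.lowerTriangular,
    toEnd_matMul _ (lowerTriangular_Mw w), ← mul_assoc]
  rfl

theorem commute_toEnd_iff {A B : ℕ → ℕ → F} (hA : LowerTriangular A)
    (hB : LowerTriangular B) : Commute (toEnd A) (toEnd B) ↔ matMul B A = matMul A B := by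
  rw [Commute, SemiconjBy, ← toEnd_matMul B hA, ← toEnd_matMul A hB,
    toEnd_inj (hA.matMul B) (hB.matMul A)]

/-- The matrix of `f(D_W)`; these are the lower-triangular matrices commuting with `M_W`. -/
noncomputable def toeplitz (w : ℕ → F) (f : PowerSeries F) : ℕ → ℕ → F :=
  fun n k => if k ≤ n then PowerSeries.coeff (n - k) f * (w n / w k) else 0

theorem lowerTriangular_toeplitz (w : ℕ → F) (f : PowerSeries F) :
    LowerTriangular (toeplitz w f) :=
  fun _ _ h => if_neg (by omega)

theorem Mw_eq_toeplitz_X (w : ℕ → F) : Mw w = toeplitz w PowerSeries.X := by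
  funext n k
  simp only [Mw, toeplitz, PowerSeries.coeff_X]
  split_ifs <;> first | omega | (subst n; simp) | simp

theorem toeplitz_one {w : ℕ → F} (hw : ∀ n, w n ≠ 0) : toeplitz w 1 = idMat := by
  funext n k
  simp only [toeplitz, idMat, PowerSeries.coeff_one]
  split_ifs <;> first | omega | (subst n; simp [hw]) | simp

theorem toeplitz_add (w : ℕ → F) (f g : PowerSeries F) :
    toeplitz w (f + g) = toeplitz w f + toeplitz w g := by
  funext n k
  simp only [toeplitz, Pi.add_apply, map_add, add_mul]
  split_ifs <;> simp

/-- Column `k` of `A` as a power series, normalised so that left multiplication by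
`toeplitz w f` becomes multiplication by `f`. -/
noncomputable def wColSeries (w : ℕ → F) (A : ℕ → ℕ → F) (k : ℕ) : PowerSeries F :=
  w k • colSeries w A k

theorem coeff_wColSeries (w : ℕ → F) (A : ℕ → ℕ → F) (k n : ℕ) :
    PowerSeries.coeff n (wColSeries w A k) = w k * (A n k / w n) := by
  rw [wColSeries, map_smul, smul_eq_mul, colSeries, PowerSeries.coeff_mk]

theorem eq_of_wColSeries_eq {w : ℕ → F} (hw : ∀ n, w n ≠ 0) {A B : ℕ → ℕ → F}
    (h : ∀ k, wColSeries w A k = wColSeries w B k) : A = B := by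
  funext n k
  have := congrArg (PowerSeries.coeff n) (h k)
  rwa [coeff_wColSeries, coeff_wColSeries, mul_right_inj' (hw k), div_left_inj' (hw n)] at this

theorem wColSeries_toeplitz {w : ℕ → F} (hw : ∀ n, w n ≠ 0) (f : PowerSeries F) (k : ℕ) :
    wColSeries w (toeplitz w f) k = PowerSeries.X ^ k * f := by
  ext n
  rw [coeff_wColSeries, PowerSeries.coeff_X_pow_mul', toeplitz]
  split_ifs
  · field_simp [hw]
  · simp

theorem wColSeries_matMul_Mw {w : ℕ → F} (hw : ∀ n, w n ≠ 0) {A : ℕ → ℕ → F}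
    (hA : LowerTriangular A) (k : ℕ) :
    wColSeries w (matMul A (Mw w)) k = wColSeries w A (k + 1) := by
  ext n
  have : matMul A (Mw w) n k = A n (k + 1) * (w (k + 1) / w k) := by
    simp only [matMul, Mw, mul_ite, mul_zero, Finset.sum_ite_eq, Finset.mem_range]
    split_ifs with h
    · rfl
    · rw [hA (by omega), zero_mul]
  rw [coeff_wColSeries, coeff_wColSeries, this]
  field_simp [hw]

theorem wColSeries_toeplitz_matMul {w : ℕ → F} (hw : ∀ n, w n ≠ 0) (f : PowerSeries F)
    (A : ℕ → ℕ → F) (k : ℕ) :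
    wColSeries w (matMul (toeplitz w f) A) k = wColSeries w A k * f := by
  ext n
  rw [coeff_wColSeries, PowerSeries.coeff_mul,
    Finset.Nat.sum_antidiagonal_eq_sum_range_succ fun i j =>
      PowerSeries.coeff i (wColSeries w A k) * PowerSeries.coeff j f,
    matMul, Finset.sum_div, Finset.mul_sum]
  refine Finset.sum_congr rfl fun l hl => ?_
  rw [toeplitz, if_pos (Nat.lt_succ_iff.1 (Finset.mem_range.1 hl)), coeff_wColSeries]
  field_simp [hw]

theorem matMul_toeplitz {w : ℕ → F} (hw : ∀ n, w n ≠ 0) (f g : PowerSeries F) :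
    matMul (toeplitz w f) (toeplitz w g) = toeplitz w (f * g) :=
  eq_of_wColSeries_eq hw fun k => by
    rw [wColSeries_toeplitz_matMul hw, wColSeries_toeplitz hw, wColSeries_toeplitz hw]
    ring

theorem eq_toeplitz_of_commute {w : ℕ → F} (hw : ∀ n, w n ≠ 0) {C : ℕ → ℕ → F}
    (hC : LowerTriangular C) (h : Commute (toEnd C) (toEnd (Mw w))) :
    C = toeplitz w (wColSeries w C 0) := by
  rw [commute_toEnd_iff hC (lowerTriangular_Mw w)] at h
  have hstep (k : ℕ) : wColSeries w C (k + 1) = wColSeries w C k * PowerSeries.X := by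
    rw [← wColSeries_matMul_Mw hw hC, ← h, Mw_eq_toeplitz_X, wColSeries_toeplitz_matMul hw]
  have hcol (k : ℕ) : wColSeries w C k = PowerSeries.X ^ k * wColSeries w C 0 := by
    induction k with
    | zero => rw [pow_zero, one_mul]
    | succ k ih => rw [hstep, ih, pow_succ]; ring
  exact eq_of_wColSeries_eq hw fun k => by rw [hcol, wColSeries_toeplitz hw]

theorem commute_toEnd_of_commute_Mw {w : ℕ → F} (hw : ∀ n, w n ≠ 0)
    {C C' : ℕ → ℕ → F} (hC : LowerTriangular C) (hC' : LowerTriangular C')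
    (h : Commute (toEnd C) (toEnd (Mw w))) (h' : Commute (toEnd C') (toEnd (Mw w))) :
    Commute (toEnd C) (toEnd C') := by
  rw [eq_toeplitz_of_commute hw hC h, eq_toeplitz_of_commute hw hC' h',
    commute_toEnd_iff (lowerTriangular_toeplitz _ _) (lowerTriangular_toeplitz _ _),
    matMul_toeplitz hw, matMul_toeplitz hw, mul_comm]

theorem stab_toeplitz {w : ℕ → F} (hw : ∀ n, w n ≠ 0) {f : PowerSeries F}
    (hf : PowerSeries.constantCoeff f ≠ 0) : Stab w (toeplitz w f) := by
  have hT := lowerTriangular_toeplitz w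
  refine (stab_iff w _).2
    ⟨⟨fun n k h => hT f h, fun n => ?_⟩, ⟨toeplitz w f⁻¹, ?_, ?_⟩, ?_⟩
  · rw [toeplitz, if_pos le_rfl, Nat.sub_self, PowerSeries.coeff_zero_eq_constantCoeff_apply,
      div_self (hw n), mul_one]
    exact hf
  · rw [matMul_toeplitz hw, PowerSeries.mul_inv_cancel f hf, toeplitz_one hw]
  · rw [matMul_toeplitz hw, PowerSeries.inv_mul_cancel f hf, toeplitz_one hw]
  · rw [Mw_eq_toeplitz_X, commute_toEnd_iff (hT _) (hT _), matMul_toeplitz hw,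
      matMul_toeplitz hw, mul_comm]

theorem isRiordan_iff_wColSeries (w : ℕ → F) (A : ℕ → ℕ → F) :
    IsRiordan w A ↔
      ∀ k, wColSeries w A (k + 1) ^ 2 = wColSeries w A k * wColSeries w A (k + 2) := by
  have key (k : ℕ) : wColSeries w A (k + 1) ^ 2 = wColSeries w A k * wColSeries w A (k + 2) ↔
      (w (k + 1)) ^ 2 • (colSeries w A (k + 1)) ^ 2 =
        (w (k + 1 - 1) * w (k + 1 + 1)) •
          (colSeries w A (k + 1 - 1) * colSeries w A (k + 1 + 1)) := by
    rw [wColSeries, wColSeries, wColSeries, _root_.smul_pow, smul_mul_smul_comm, Nat.add_sub_cancel]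
  refine ⟨fun h k => (key k).2 (h (k + 1) le_add_self), fun h k hk => ?_⟩
  obtain ⟨k, rfl⟩ := Nat.exists_eq_add_of_le' hk
  exact (key k).1 (h k)

theorem isRiordan_iff_exists_wColSeries_succ {w : ℕ → F} (hw : ∀ n, w n ≠ 0)
    {A : ℕ → ℕ → F} (hA : memL A) :
    IsRiordan w A ↔ ∃ f, ∀ k, wColSeries w A (k + 1) = wColSeries w A k * f := by
  rw [isRiordan_iff_wColSeries]
  set g := wColSeries w A
  constructor
  · intro h
    have hg (k : ℕ) : PowerSeries.coeff k (g k) ≠ 0 := by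
      rw [coeff_wColSeries, mul_div_cancel₀ _ (hw k)]
      exact hA.2 k
    have hg0 : PowerSeries.constantCoeff (g 0) ≠ 0 := by
      rw [← PowerSeries.coeff_zero_eq_constantCoeff_apply]
      exact hg 0
    refine ⟨(g 0)⁻¹ * g 1, fun k => ?_⟩
    induction k with
    | zero => rw [← mul_assoc, PowerSeries.mul_inv_cancel _ hg0, one_mul]
    | succ k ih =>
      have hgk : g k ≠ 0 := ne_of_apply_ne (PowerSeries.coeff k) (by rw [map_zero]; exact hg k)
      refine mul_left_cancel₀ hgk ?_
      rw [show k + 1 + 1 = k + 2 from rfl, ← h k, sq, ih]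
      ring
  · rintro ⟨f, hf⟩ k
    rw [hf (k + 1), hf k]
    ring

theorem wColSeries_succ_eq_mul_iff {w : ℕ → F} (hw : ∀ n, w n ≠ 0) {A : ℕ → ℕ → F}
    (hA : LowerTriangular A) (f : PowerSeries F) :
    (∀ k, wColSeries w A (k + 1) = wColSeries w A k * f) ↔
      matMul A (Mw w) = matMul (toeplitz w f) A := by
  simp only [← wColSeries_matMul_Mw hw hA, ← wColSeries_toeplitz_matMul hw]
  exact ⟨eq_of_wColSeries_eq hw, fun h k => by rw [h]⟩

theorem isRiordan_iff_commute {w : ℕ → F} (hw : ∀ n, w n ≠ 0) {A B : ℕ → ℕ → F}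
    (hA : memL A) (hAB : IsInv A B) :
    IsRiordan w A ↔ Commute (toEnd (matMul (matMul A (Mw w)) B)) (toEnd (Mw w)) := by
  have hAL := hA.lowerTriangular
  have hBL := hAB.lowerTriangular hA
  have hN := hBL.matMul (matMul A (Mw w))
  have hBA : toEnd B * toEnd A = 1 := (matMul_eq_idMat_iff A hBL).1 hAB.1
  have hAB' : toEnd A * toEnd B = 1 := (matMul_eq_idMat_iff B hAL).1 hAB.2
  rw [isRiordan_iff_exists_wColSeries_succ hw hA]
  simp only [wColSeries_succ_eq_mul_iff hw hAL]
  constructor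
  · rintro ⟨f, hf⟩
    have : toEnd (matMul (matMul A (Mw w)) B) = toEnd (toeplitz w f) := by
      rw [hf, toEnd_matMul _ hBL, toEnd_matMul _ hAL, ← mul_assoc, hBA, one_mul]
    rw [this, Mw_eq_toeplitz_X, commute_toEnd_iff (lowerTriangular_toeplitz _ _)
      (lowerTriangular_toeplitz _ _), matMul_toeplitz hw, matMul_toeplitz hw, mul_comm]
  · intro h
    refine ⟨wColSeries w (matMul (matMul A (Mw w)) B) 0, ?_⟩
    rw [← eq_toeplitz_of_commute hw hN h, ← toEnd_inj ((lowerTriangular_Mw w).matMul A)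
      (hAL.matMul _), toEnd_matMul _ hAL, toEnd_matMul _ hBL, toEnd_matMul _ (lowerTriangular_Mw w),
      ← mul_assoc, ← mul_assoc, hAB', one_mul]

theorem isRiordan_iff_normalizes_stab {w : ℕ → F} (hw : ∀ n, w n ≠ 0)
    {A B : ℕ → ℕ → F} (hA : memL A) (hAB : IsInv A B) :
    IsRiordan w A ↔
      ((∀ C, Stab w C → Stab w (matMul (matMul B C) A)) ∧
        (∀ C, Stab w C → Stab w (matMul (matMul A C) B))) := by
  have hB := hAB.memL_right hA
  have hN := (hAB.lowerTriangular hA).matMul (matMul A (Mw w))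
  have hN' := hA.lowerTriangular.matMul (matMul B (Mw w))
  have hNN' : Commute (toEnd (matMul (matMul A (Mw w)) B)) (toEnd (Mw w)) ↔
      Commute (toEnd (matMul (matMul B (Mw w)) A)) (toEnd (Mw w)) := by
    rw [toEnd_matMul _ (hAB.lowerTriangular hA), toEnd_matMul _ hA.lowerTriangular,
      toEnd_matMul _ (lowerTriangular_Mw w), toEnd_matMul _ (lowerTriangular_Mw w), ← mul_assoc,
      ← mul_assoc, Commute.symm_iff]
    exact ((hAB.unit hA).commute_conj_iff _ _).symm
  rw [isRiordan_iff_commute hw hA hAB]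
  constructor
  · intro h
    refine ⟨fun C hC => (stab_conj_iff w hA hAB hC).2 ?_,
      fun C hC => (stab_conj_iff w hB hAB.symm hC).2 ?_⟩
    · exact commute_toEnd_of_commute_Mw hw hC.1.lowerTriangular hN ((stab_iff w C).1 hC).2.2 h
    · exact commute_toEnd_of_commute_Mw hw hC.1.lowerTriangular hN' ((stab_iff w C).1 hC).2.2
        (hNN'.1 h)
  · rintro ⟨-, h⟩
    have h0 := stab_toeplitz hw (f := 1 + PowerSeries.X) (by simp)
    have := (stab_conj_iff w hB hAB.symm h0).1 (h _ h0)
    rw [toeplitz_add, toeplitz_one hw, ← Mw_eq_toeplitz_X, toEnd_add, toEnd_idMat] at this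
    have := this.sub_left (Commute.one_left _)
    rw [add_sub_cancel_left] at this
    exact hNN'.2 this.symm

theorem memL_of_degree {p : ℕ → F[X]} (hp : ∀ n, (p n).degree = n) {A : ℕ → ℕ → F}
    (hA : ∀ n k, A n k = (p n).coeff k) : memL A :=
  ⟨fun n k h => by rw [hA]; exact coeff_eq_zero_of_degree_lt (by rw [hp]; exact_mod_cast h),
    fun n => by rw [hA]; exact coeff_ne_zero_of_eq_degree (hp n)⟩

theorem toEnd_X_pow_of_degree {p : ℕ → F[X]} (hp : ∀ n, (p n).degree = n)
    {A : ℕ → ℕ → F} (hA : ∀ n k, A n k = (p n).coeff k) (n : ℕ) :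
    toEnd A (X ^ n) = p n := by
  rw [toEnd_X_pow]
  simp only [hA]
  exact (as_sum_range' (p n) (n + 1) (by rw [natDegree_eq_of_degree_eq_some (hp n)]; omega)).symm

theorem toEnd_Mw {w : ℕ → F} {D : Module.End F F[X]} (hD0 : D 1 = 0)
    (hD : ∀ n : ℕ, D (X ^ (n + 1)) = (w (n + 1) / w n) • (X : F[X]) ^ n) :
    toEnd (Mw w) = D := by
  refine End_ext_X_pow fun n => Polynomial.ext fun k => ?_
  rw [coeff_toEnd_X_pow (lowerTriangular_Mw w)]
  cases n with
  | zero => simp [Mw, hD0]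
  | succ n => simp [Mw, hD, coeff_X_pow]

theorem toEnd_conj {A B M : ℕ → ℕ → F} (hA : memL A) (hAB : IsInv A B)
    (hM : LowerTriangular M) {Q : Module.End F F[X]} (hQ : Q * toEnd A = toEnd A * toEnd M) :
    toEnd (matMul (matMul B M) A) = Q := by
  rw [toEnd_matMul _ hA.lowerTriangular, toEnd_matMul _ hM, ← mul_assoc, ← hQ, mul_assoc,
    (matMul_eq_idMat_iff B hA.lowerTriangular).1 hAB.2, mul_one]

end LowerTriangular

theorem stmt17_general {F : Type*} [Field F] (w : ℕ → F)
    (hw : ∀ n, w n ≠ 0)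
    (p : ℕ → F[X]) (hp : ∀ n, (p n).degree = n)
    (Q : F[X] →ₗ[F] F[X]) (hQ0 : Q (p 0) = 0)
    (hQ : ∀ n : ℕ, Q (p (n + 1)) = (w (n + 1) / w n) • p n)
    -- `A` is the matrix of the sequence and `B` its inverse
    (A : ℕ → ℕ → F) (hA : ∀ n k, A n k = (p n).coeff k)
    (B : ℕ → ℕ → F) (hB : IsInv A B)
    -- the weighted derivative `D_W`
    (D : F[X] →ₗ[F] F[X]) (hD0 : D 1 = 0)
    (hD : ∀ n : ℕ, D (X ^ (n + 1)) = (w (n + 1) / w n) • (X : F[X]) ^ n) :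
    -- `Q_A` is represented by the matrix `A⁻¹ M_W A`
    (∀ n k : ℕ, (Q (X ^ n)).coeff k = matMul (matMul B (Mw w)) A n k) ∧
    -- the Appell group is the stabilizer of `M_W`
    ((Q = D) ↔ matMul (matMul B (Mw w)) A = Mw w) ∧
    -- the Riordan group is the normalizer of the stabilizer
    (IsRiordan w A ↔
      ((∀ C : ℕ → ℕ → F, Stab w C → Stab w (matMul (matMul B C) A)) ∧
       (∀ C : ℕ → ℕ → F, Stab w C → Stab w (matMul (matMul A C) B)))) := by
  have hAL : memL A := memL_of_degree hp hA
  have hP := toEnd_X_pow_of_degree hp hA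
  have hDM : toEnd (Mw w) = D := toEnd_Mw hD0 hD
  have hQP : Q * toEnd A = toEnd A * D := End_ext_X_pow fun n => by
    cases n with
    | zero => rw [Module.End.mul_apply, Module.End.mul_apply, hP, hQ0, pow_zero, hD0, map_zero]
    | succ n => rw [Module.End.mul_apply, Module.End.mul_apply, hP, hQ, hD, map_smul, hP]
  have hQN : toEnd (matMul (matMul B (Mw w)) A) = Q :=
    toEnd_conj hAL hB (lowerTriangular_Mw w) (hDM ▸ hQP)
  have hN := hAL.lowerTriangular.matMul (matMul B (Mw w))
  refine ⟨fun n k => by rw [← hQN, coeff_toEnd_X_pow hN], ?_,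
    isRiordan_iff_normalizes_stab hw hAL hB⟩
  rw [← hQN, ← hDM, toEnd_inj hN (lowerTriangular_Mw w)]

/-- The operator `Q_A` of a graded sequence is represented in the monomial
basis by `A⁻¹ M_W A`; the `W`-Appell sequences form the stabilizer of `M_W`
in `L`, and the `W`-Riordan group is the normalizer of that stabilizer. -/
theorem stmt17 {F : Type*} [Field F] (w : ℕ → F) (hw0 : w 0 = 1)
    (hw : ∀ n, w n ≠ 0)
    (p : ℕ → F[X]) (hp : ∀ n, (p n).degree = n)
    (Q : F[X] →ₗ[F] F[X]) (hQ0 : Q (p 0) = 0)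
    (hQ : ∀ n : ℕ, Q (p (n + 1)) = (w (n + 1) / w n) • p n)
    -- `A` is the matrix of the sequence and `B` its inverse
    (A : ℕ → ℕ → F) (hA : ∀ n k, A n k = (p n).coeff k)
    (B : ℕ → ℕ → F) (hB : IsInv A B)
    -- the weighted derivative `D_W`
    (D : F[X] →ₗ[F] F[X]) (hD0 : D 1 = 0)
    (hD : ∀ n : ℕ, D (X ^ (n + 1)) = (w (n + 1) / w n) • (X : F[X]) ^ n) :
    -- `Q_A` is represented by the matrix `A⁻¹ M_W A`
    (∀ n k : ℕ, (Q (X ^ n)).coeff k = matMul (matMul B (Mw w)) A n k) ∧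
    -- the Appell group is the stabilizer of `M_W`
    ((Q = D) ↔ matMul (matMul B (Mw w)) A = Mw w) ∧
    -- the Riordan group is the normalizer of the stabilizer
    (IsRiordan w A ↔
      ((∀ C : ℕ → ℕ → F, Stab w C → Stab w (matMul (matMul B C) A)) ∧
       (∀ C : ℕ → ℕ → F, Stab w C → Stab w (matMul (matMul A C) B)))) :=
  stmt17_general w hw p hp Q hQ0 hQ A hA B hB D hD0 hD
end
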